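/- arXiv:1006.4449 — 7 statements merged into one kernel-verified Lean document; each statement's English description precedes it below -/
import Mathlib

section
/- Let m, n be positive integers and let F be a binary image contained in {1,…,m} × {1,…,n} with row sums r_1,…,r_m and column sums c_1,…,c_n, such that r_1 = n and r_m = 0. Define b_i = #{j ∈ {1,…,n} : c_j ≥ i} and d_i = b_i − r_i for i = 1,…,m, and let L_h be the length of the horizontal boundary of F. Then for every integer t ≥ 0 and every choice of indices 1 ≤ i_1 < i_2 < ⋯ < i_{2t+1} ≤ m one has L_h ≥ 2n + Σ_{s=1}^{t} (d_{i_{2s−1}} − d_{i_{2s}}) + 2·d_{i_{2t+1}}. -/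
/-!
Everything splits over columns. For a column with row set `S ⊆ [1, m - 1]` containing `1`, the
number of horizontal boundary edges is twice the number of upward jumps of `𝟙_S` on `[0, m]`,
and its share of `d_i` is `𝟙[i ≤ #S] - 𝟙_S(i)`. An alternating sum of these shares is bounded
by the upward jumps of `𝟙_S` between `i_1` and `i_{2t+1}` plus the single downward jump of
`𝟙[· ≤ #S]`. If `S = [1, #S]` all shares vanish; otherwise `S` has a hole at most `#S` and an
element beyond `#S`, and these force the extra jumps that pay for `2 + 2 d_{i_{2t+1}}`.
-/

/-- The row sum `r i` of a binary image `F`: the number of points of `F` in row `i`. -/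
def rowSum (F : Finset (ℤ × ℤ)) (i : ℤ) : ℕ := (F.filter fun p => p.1 = i).card

/-- The column sum `c j` of a binary image `F`: the number of points of `F` in column `j`. -/
def colSum (F : Finset (ℤ × ℤ)) (j : ℤ) : ℕ := (F.filter fun p => p.2 = j).card

/-- The length of the horizontal boundary of `F`: the number of pairs
`((i,j),(i',j'))` with `j = j'`, `|i - i'| = 1`, `(i,j) ∈ F` and `(i',j') ∉ F`. -/
noncomputable def horizBoundaryLen (F : Finset (ℤ × ℤ)) : ℕ :=
  Set.ncard {q : (ℤ × ℤ) × (ℤ × ℤ) |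
    q.1.2 = q.2.2 ∧ |q.1.1 - q.2.1| = 1 ∧ q.1 ∈ F ∧ q.2 ∉ F}

open Finset

section PosVar

variable (f : ℤ → ℤ) {a b c : ℤ}

theorem sum_Ico_sub_of_le (h : a ≤ b) : ∑ i ∈ Ico a b, (f (i + 1) - f i) = f b - f a := by
  induction b, h using Int.leInduction with
  | base => simp
  | succ b hab ih =>
    rw [Ico_add_one_right_eq_Icc, ← Ico_insert_right hab, sum_insert (by simp), ih]
    ring

noncomputable def posVar (a b : ℤ) : ℤ := ∑ i ∈ Ico a b, (f (i + 1) - f i)⁺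

theorem posVar_nonneg : 0 ≤ posVar f a b :=
  sum_nonneg fun _ _ => posPart_nonneg _

theorem posVar_add (hab : a ≤ b) (hbc : b ≤ c) : posVar f a b + posVar f b c = posVar f a c := by
  rw [posVar, posVar, posVar, ← sum_union (Ico_disjoint_Ico_consecutive a b c),
    Ico_union_Ico_eq_Ico hab hbc]

theorem posVar_mono {a' b' : ℤ} (ha : a' ≤ a) (hb : b ≤ b') : posVar f a b ≤ posVar f a' b' :=
  sum_le_sum_of_subset_of_nonneg (Ico_subset_Ico ha hb) fun _ _ _ => posPart_nonneg _

theorem sub_le_posVar (h : a ≤ b) : f b - f a ≤ posVar f a b := by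
  rw [← sum_Ico_sub_of_le f h]
  exact sum_le_sum fun _ _ => le_posPart _

theorem sum_abs_sub_eq_two_mul_posVar (h : a ≤ b) :
    ∑ i ∈ Ico a b, |f (i + 1) - f i| = 2 * posVar f a b - (f b - f a) := by
  rw [posVar, ← sum_Ico_sub_of_le f h, mul_sum, ← sum_sub_distrib]
  refine sum_congr rfl fun i _ => ?_
  linarith [posPart_add_negPart (f (i + 1) - f i), posPart_sub_negPart (f (i + 1) - f i)]

theorem posVar_sub_le_of_antitone {g : ℤ → ℤ} (hg : Antitone g) (h : a ≤ b) :
    posVar (f - g) a b ≤ posVar f a b + (g a - g b) := by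
  rw [posVar, posVar, ← neg_sub (g b), ← sum_Ico_sub_of_le g h, ← sum_neg_distrib,
    ← sum_add_distrib]
  refine sum_le_sum fun i _ => ?_
  have hgi := hg (show i ≤ i + 1 by omega)
  simp only [Pi.sub_apply, posPart_def]
  omega

theorem sum_sub_le_posVar (t : ℕ) (x : ℕ → ℤ) (hx : ∀ r s, r ≤ s → s ≤ 2 * t → x r ≤ x s) :
    ∑ s ∈ range t, (f (x (2 * s + 1)) - f (x (2 * s))) ≤ posVar f (x 0) (x (2 * t)) := by
  induction t generalizing x with
  | zero => simpa using posVar_nonneg f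
  | succ t ih =>
    have ih' := ih (fun s => x (s + 2)) fun r s hrs hs => hx _ _ (by omega) (by omega)
    have h01 := sub_le_posVar f (hx 0 1 (by omega) (by omega))
    have h12 := posVar_mono f le_rfl (hx 1 2 (by omega) (by omega)) (a := x 0)
    rw [sum_range_succ', ← posVar_add f (hx 0 2 (by omega) (by omega)) (hx 2 _ (by omega) le_rfl)]
    simp only [show ∀ s, 2 * (s + 1) = 2 * s + 2 by omega, mul_zero, zero_add] at ih' ⊢
    linarith

end PosVar

section Column

variable {S : Finset ℤ}

/-- For `S` the rows of column `j`, this is the summand `[i ≤ c_j] - [(i, j) ∈ F]` of `d_i`. -/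
noncomputable def colDefect (S : Finset ℤ) : ℤ → ℤ :=
  (Set.Iic (#S : ℤ)).indicator 1 - (S : Set ℤ).indicator 1

theorem colDefect_eq_zero_of_eq_Icc (hS : S = Icc 1 (#S : ℤ)) {i : ℤ} (hi : 1 ≤ i) :
    colDefect S i = 0 := by
  have hmem : i ∈ S ↔ i ≤ #S := by
    conv_lhs => rw [hS]
    simp [hi]
  simp only [colDefect, Pi.sub_apply, Set.indicator_apply, Set.mem_Iic, mem_coe, hmem, sub_self]

theorem exists_hole_and_surplus (hS : ∀ i ∈ S, 1 ≤ i) (hne : S ≠ Icc 1 (#S : ℤ)) :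
    (∃ q, 1 ≤ q ∧ q ≤ (#S : ℤ) ∧ q ∉ S) ∧ ∃ p ∈ S, (#S : ℤ) < p := by
  have hcard : #(Icc 1 (#S : ℤ)) = #S := by simp
  constructor
  · by_contra! h
    exact hne (eq_of_subset_of_card_le (fun q hq => h q (mem_Icc.1 hq).1 (mem_Icc.1 hq).2)
      hcard.ge).symm
  · by_contra! h
    exact hne (eq_of_subset_of_card_le (fun p hp => mem_Icc.2 ⟨hS p hp, h p hp⟩) hcard.le)

theorem one_le_posVar_indicator {a b p q : ℤ} (hq : q ∉ S) (hp : p ∈ S) (haq : a ≤ q)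
    (hqp : q ≤ p) (hpb : p ≤ b) : 1 ≤ posVar ((S : Set ℤ).indicator 1) a b := by
  have := sub_le_posVar ((S : Set ℤ).indicator 1) hqp
  rw [Set.indicator_of_mem (mem_coe.2 hp), Set.indicator_of_notMem (mt mem_coe.1 hq),
    Pi.one_apply, sub_zero] at this
  linarith [posVar_mono ((S : Set ℤ).indicator 1) haq hpb]

theorem sum_colDefect_sub_le (t : ℕ) (x : ℕ → ℤ) (hx : ∀ r s, r ≤ s → s ≤ 2 * t → x r ≤ x s) :
    ∑ s ∈ range t, (colDefect S (x (2 * s)) - colDefect S (x (2 * s + 1)))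
      ≤ posVar ((S : Set ℤ).indicator 1) (x 0) (x (2 * t))
        + ((Set.Iic (#S : ℤ)).indicator 1 (x 0) - (Set.Iic (#S : ℤ)).indicator 1 (x (2 * t))) := by
  have hstep : Antitone ((Set.Iic (#S : ℤ)).indicator (1 : ℤ → ℤ)) := fun i j hij => by
    simp only [Set.indicator_apply, Set.mem_Iic, Pi.one_apply]
    split_ifs <;> omega
  calc _ = ∑ s ∈ range t, (-colDefect S (x (2 * s + 1)) - -colDefect S (x (2 * s))) :=
        sum_congr rfl fun _ _ => by ring
    _ ≤ posVar (-colDefect S) (x 0) (x (2 * t)) := sum_sub_le_posVar _ t x hx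
    _ ≤ _ := by
      rw [colDefect, neg_sub]
      exact posVar_sub_le_of_antitone _ hstep (hx 0 _ (Nat.zero_le _) le_rfl)

theorem two_add_sum_colDefect_le {M : ℤ} (hS : S ⊆ Icc 1 M) (h1 : 1 ∈ S) (hM : M ∉ S)
    (t : ℕ) (x : ℕ → ℤ) (hx : ∀ r s, r ≤ s → s ≤ 2 * t → x r ≤ x s) (hx0 : 1 ≤ x 0)
    (hxM : x (2 * t) ≤ M) :
    2 + ∑ s ∈ range t, (colDefect S (x (2 * s)) - colDefect S (x (2 * s + 1)))
        + 2 * colDefect S (x (2 * t))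
      ≤ ∑ i ∈ Ico 0 M, |(S : Set ℤ).indicator 1 (i + 1) - (S : Set ℤ).indicator 1 i| := by
  set χ : ℤ → ℤ := (S : Set ℤ).indicator 1
  set g : ℤ → ℤ := (Set.Iic (#S : ℤ)).indicator 1
  set T := x (2 * t)
  have hχ : ∀ {i}, i ∈ S → χ i = 1 := fun hi => Set.indicator_of_mem (mem_coe.2 hi) _
  have hχ' : ∀ {i}, i ∉ S → χ i = 0 := fun hi => Set.indicator_of_notMem (mt mem_coe.1 hi) _
  have hg01 : ∀ i, 0 ≤ g i ∧ g i ≤ 1 := fun i => by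
    simp only [g, Set.indicator_apply, Set.mem_Iic, Pi.one_apply]; split_ifs <;> omega
  have h0 : (0 : ℤ) ∉ S := fun h => by simpa using hS h
  have hxT : x 0 ≤ T := hx 0 _ (Nat.zero_le _) le_rfl
  have h01 : 1 ≤ posVar χ 0 1 := one_le_posVar_indicator h0 h1 le_rfl zero_le_one le_rfl
  have hsplit : posVar χ 0 M = posVar χ 0 1 + posVar χ 1 T + posVar χ T M := by
    rw [posVar_add χ zero_le_one (by omega), posVar_add χ (by omega) hxM]
  rw [sum_abs_sub_eq_two_mul_posVar χ (by omega), hχ' hM, hχ' h0, hsplit]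
  have := posVar_nonneg χ (a := 1) (b := T)
  have := posVar_nonneg χ (a := T) (b := M)
  by_cases hSI : S = Icc 1 (#S : ℤ)
  · have hx1 : ∀ s ≤ 2 * t, 1 ≤ x s := fun s hs => hx0.trans (hx 0 s (Nat.zero_le _) hs)
    rw [colDefect_eq_zero_of_eq_Icc hSI (hx1 _ le_rfl),
      sum_eq_zero fun s hs => by
        rw [colDefect_eq_zero_of_eq_Icc hSI (hx1 _ (by simp at hs; omega)),
          colDefect_eq_zero_of_eq_Icc hSI (hx1 _ (by simp at hs; omega)), sub_zero]]
    linarith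
  obtain ⟨⟨q, hq1, hqc, hqS⟩, p, hpS, hcp⟩ :=
    exists_hole_and_surplus (fun i hi => (mem_Icc.1 (hS hi)).1) hSI
  have hpM : p ≤ M := (mem_Icc.1 (hS hpS)).2
  have halt := (sum_colDefect_sub_le t x hx).trans
    (add_le_add_left (posVar_mono χ hx0 (le_refl T)) _)
  have hdef : colDefect S T = g T - χ T := rfl
  by_cases hhole : T ≤ #S ∧ T ∉ S
  · have hgT : g T = 1 := Set.indicator_of_mem (Set.mem_Iic.2 hhole.1) _
    have hTM : 1 ≤ posVar χ T M := one_le_posVar_indicator hhole.2 hpS le_rfl (by omega) hpM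
    linarith [hg01 (x 0), hχ' hhole.2]
  · have hT : colDefect S T ≤ 0 := by
      by_cases hTS : T ∈ S
      · linarith [hχ hTS, hg01 T]
      · rw [hdef, hχ' hTS, sub_zero]
        exact (Set.indicator_of_notMem (fun h => hhole ⟨Set.mem_Iic.1 h, hTS⟩) _).le
    have h1M : 1 ≤ posVar χ 1 M := one_le_posVar_indicator hqS hpS hq1 (by omega) hpM
    rw [← posVar_add χ (by omega) hxM] at h1M
    linarith [hg01 (x 0), hg01 T]

end Column

theorem horizBoundaryLen_eq_card_add_card {F : Finset (ℤ × ℤ)} {a b : ℤ} {s : Finset ℤ}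
    (hF : ∀ p ∈ F, p.1 ∈ Ioo a b ∧ p.2 ∈ s) :
    horizBoundaryLen F = #((Ico a b ×ˢ s).filter fun p => p ∈ F ∧ (p.1 + 1, p.2) ∉ F)
      + #((Ico a b ×ˢ s).filter fun p => p ∉ F ∧ (p.1 + 1, p.2) ∈ F) := by
  set up : ℤ × ℤ → ℤ × ℤ := fun p => (p.1 + 1, p.2)
  set D := (Ico a b ×ˢ s).filter fun p => p ∈ F ∧ up p ∉ F
  set U := (Ico a b ×ˢ s).filter fun p => p ∉ F ∧ up p ∈ F
  have hset : {q : (ℤ × ℤ) × (ℤ × ℤ) | q.1.2 = q.2.2 ∧ |q.1.1 - q.2.1| = 1 ∧ q.1 ∈ F ∧ q.2 ∉ F}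
      = ↑(D.image (fun p => (p, up p)) ∪ U.image (fun p => (up p, p))) := by
    ext ⟨⟨i, j⟩, ⟨i', j'⟩⟩
    simp only [Set.mem_ofPred_eq, coe_union, coe_image, coe_filter, Set.mem_union, Set.mem_image,
      mem_product, mem_Ico, Prod.mk.injEq, up, D, U, Prod.exists]
    constructor
    · rintro ⟨rfl, habs, hin, hout⟩
      obtain ⟨hi, hj⟩ := hF _ hin
      rw [mem_Ioo] at hi
      rcases (abs_eq zero_le_one).1 habs with h | h
      · obtain rfl : i = i' + 1 := by omega
        exact Or.inr ⟨i', j, ⟨⟨⟨by omega, by omega⟩, hj⟩, hout, hin⟩, ⟨rfl, rfl⟩, rfl, rfl⟩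
      · obtain rfl : i' = i + 1 := by omega
        exact Or.inl ⟨i, j, ⟨⟨⟨by omega, by omega⟩, hj⟩, hin, hout⟩, ⟨rfl, rfl⟩, rfl, rfl⟩
    · rintro (⟨i, j, ⟨-, hin, hout⟩, ⟨rfl, rfl⟩, rfl, rfl⟩ |
        ⟨i, j, ⟨-, hout, hin⟩, ⟨rfl, rfl⟩, rfl, rfl⟩)
      · exact ⟨rfl, by norm_num, hin, hout⟩
      · exact ⟨rfl, by norm_num, hin, hout⟩
  have hdisj : Disjoint (D.image fun p => (p, up p)) (U.image fun p => (up p, p)) := by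
    simp only [disjoint_left, mem_image, not_exists, not_and]
    rintro _ ⟨p, -, rfl⟩ q - h
    simp only [Prod.ext_iff, up] at h
    omega
  rw [horizBoundaryLen, hset, Set.ncard_coe_finset, card_union_of_disjoint hdisj,
    card_image_of_injective _ fun p q h => congrArg Prod.fst h,
    card_image_of_injective _ fun p q h => congrArg Prod.snd h]

theorem horizBoundaryLen_eq_sum {F : Finset (ℤ × ℤ)} {a b : ℤ} {s : Finset ℤ}
    (hF : ∀ p ∈ F, p.1 ∈ Ioo a b ∧ p.2 ∈ s) :
    (horizBoundaryLen F : ℤ) = ∑ j ∈ s, ∑ i ∈ Ico a b,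
      |(F : Set (ℤ × ℤ)).indicator 1 (i + 1, j) - (F : Set (ℤ × ℤ)).indicator 1 (i, j)| := by
  rw [horizBoundaryLen_eq_card_add_card hF, ← sum_product_right (Ico a b) s fun p =>
    |(F : Set (ℤ × ℤ)).indicator 1 (p.1 + 1, p.2) - (F : Set (ℤ × ℤ)).indicator 1 p|]
  push_cast
  rw [card_filter, card_filter, Nat.cast_sum, Nat.cast_sum, ← sum_add_distrib]
  refine sum_congr rfl fun p _ => ?_
  simp only [Set.indicator_apply, mem_coe, Pi.one_apply]
  split_ifs <;> simp_all

section Rows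

variable {F : Finset (ℤ × ℤ)} {s : Finset ℤ} {i j : ℤ}

def column (F : Finset (ℤ × ℤ)) (j : ℤ) : Finset ℤ := (F.filter fun p => p.2 = j).image Prod.fst

theorem mem_column : i ∈ column F j ↔ (i, j) ∈ F := by
  simp [column]

theorem card_column : #(column F j) = colSum F j :=
  card_image_of_injOn fun _ hp _ hq h =>
    Prod.ext h ((mem_filter.1 hp).2.trans (mem_filter.1 hq).2.symm)

theorem indicator_column :
    (column F j : Set ℤ).indicator (1 : ℤ → ℤ) i = (F : Set (ℤ × ℤ)).indicator 1 (i, j) := by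
  simp only [Set.indicator_apply, mem_coe, mem_column, Pi.one_apply]

theorem rowSum_eq_card_filter (hF : ∀ p ∈ F, p.2 ∈ s) :
    rowSum F i = #(s.filter fun j => (i, j) ∈ F) :=
  card_nbij' Prod.snd (fun j => (i, j))
    (fun p hp => by obtain ⟨hpF, rfl⟩ := mem_filter.1 hp; simp [hF p hpF, hpF])
    (fun j hj => by simp_all) (fun p hp => by obtain ⟨-, rfl⟩ := mem_filter.1 hp; rfl)
    (fun _ _ => rfl)

theorem mem_of_rowSum_eq_card (hF : ∀ p ∈ F, p.2 ∈ s) (h : rowSum F i = #s) (hj : j ∈ s) :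
    (i, j) ∈ F :=
  filter_card_eq ((rowSum_eq_card_filter hF).symm.trans h) j hj

theorem notMem_of_rowSum_eq_zero (h : rowSum F i = 0) : (i, j) ∉ F := fun hij =>
  filter_eq_empty_iff.1 (card_eq_zero.1 h) hij rfl

theorem sum_colDefect_column (hF : ∀ p ∈ F, p.2 ∈ s) (i : ℤ) :
    ∑ j ∈ s, colDefect (column F j) i
      = (#(s.filter fun j => i ≤ (colSum F j : ℤ)) : ℤ) - rowSum F i := by
  rw [rowSum_eq_card_filter hF]
  simp only [colDefect, Pi.sub_apply, sum_sub_distrib, card_column, Set.indicator_apply,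
    Set.mem_Iic, mem_coe, mem_column, Pi.one_apply, sum_boole]

end Rows

/-- `idx 0, idx 1, …, idx (2t)` play the role of `i_1 < i_2 < ⋯ < i_{2t+1}`. -/
theorem boundary_lower_bound_one_general (m n : ℕ)
    (F : Finset (ℤ × ℤ))
    (hF : ∀ p ∈ F, p.1 ∈ Finset.Icc (1 : ℤ) (m : ℤ) ∧ p.2 ∈ Finset.Icc (1 : ℤ) (n : ℤ))
    (hr1 : rowSum F 1 = n) (hrm : rowSum F (m : ℤ) = 0)
    (b : ℤ → ℕ)
    (hb : ∀ i : ℤ, b i = ((Finset.Icc (1 : ℤ) (n : ℤ)).filter fun j => i ≤ (colSum F j : ℤ)).card)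
    (d : ℤ → ℤ) (hd : ∀ i : ℤ, d i = (b i : ℤ) - (rowSum F i : ℤ))
    (t : ℕ) (idx : ℕ → ℤ)
    (hidx_mono : ∀ a b : ℕ, a < b → b ≤ 2 * t → idx a < idx b)
    (hidx_range : ∀ s : ℕ, s ≤ 2 * t → idx s ∈ Finset.Icc (1 : ℤ) (m : ℤ)) :
    (horizBoundaryLen F : ℤ) ≥
      2 * n + (∑ s ∈ Finset.range t, (d (idx (2 * s)) - d (idx (2 * s + 1))))
        + 2 * d (idx (2 * t)) := by
  have hcols : ∀ p ∈ F, p.2 ∈ Icc (1 : ℤ) n := fun p hp => (hF p hp).2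
  have hrows : ∀ p ∈ F, p.1 ∈ Ioo (0 : ℤ) m ∧ p.2 ∈ Icc (1 : ℤ) n := fun p hp => by
    have hm : p.1 ≠ m := fun h => notMem_of_rowSum_eq_zero (j := p.2) hrm (by rw [← h]; exact hp)
    have := mem_Icc.1 (hF p hp).1
    exact ⟨mem_Ioo.2 ⟨by omega, lt_of_le_of_ne this.2 hm⟩, (hF p hp).2⟩
  have hd' : ∀ i, d i = ∑ j ∈ Icc (1 : ℤ) n, colDefect (column F j) i := fun i => by
    rw [hd, hb, sum_colDefect_column hcols]
  have hcol : ∀ j ∈ Icc (1 : ℤ) n, 2 + ∑ s ∈ range t,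
      (colDefect (column F j) (idx (2 * s)) - colDefect (column F j) (idx (2 * s + 1)))
        + 2 * colDefect (column F j) (idx (2 * t))
      ≤ ∑ i ∈ Ico 0 (m : ℤ), |(F : Set (ℤ × ℤ)).indicator 1 (i + 1, j)
          - (F : Set (ℤ × ℤ)).indicator 1 (i, j)| := fun j hj => by
    simp only [← indicator_column]
    exact two_add_sum_colDefect_le (fun i hi => (hF _ (mem_column.1 hi)).1)
      (mem_column.2 (mem_of_rowSum_eq_card hcols (by simpa using hr1) hj))
      (fun h => notMem_of_rowSum_eq_zero hrm (mem_column.1 h)) t idx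
      (fun r s hrs hs => hrs.eq_or_lt.elim (fun h => h ▸ le_rfl) fun h => (hidx_mono r s h hs).le)
      (mem_Icc.1 (hidx_range 0 (Nat.zero_le _))).1 (mem_Icc.1 (hidx_range _ le_rfl)).2
  rw [ge_iff_le, horizBoundaryLen_eq_sum hrows]
  refine le_trans (le_of_eq ?_) (sum_le_sum hcol)
  simp only [hd', sum_add_distrib, sum_sub_distrib, mul_sum]
  rw [sum_comm (s := range t), sum_comm (s := range t)]
  simp [mul_comm]

/-- Theorem 1, inequality (1): the lower bound
`L_h ≥ 2n + d_{i_1} - d_{i_2} + d_{i_3} - ⋯ - d_{i_{2t}} + 2 d_{i_{2t+1}}`.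
Here `idx 0, idx 1, …, idx (2t)` play the role of `i_1 < i_2 < ⋯ < i_{2t+1}`. -/
theorem boundary_lower_bound_one (m n : ℕ) (hm : 0 < m) (hn : 0 < n)
    (F : Finset (ℤ × ℤ))
    (hF : ∀ p ∈ F, p.1 ∈ Finset.Icc (1 : ℤ) (m : ℤ) ∧ p.2 ∈ Finset.Icc (1 : ℤ) (n : ℤ))
    (hr1 : rowSum F 1 = n) (hrm : rowSum F (m : ℤ) = 0)
    (b : ℤ → ℕ)
    (hb : ∀ i : ℤ, b i = ((Finset.Icc (1 : ℤ) (n : ℤ)).filter fun j => i ≤ (colSum F j : ℤ)).card)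
    (d : ℤ → ℤ) (hd : ∀ i : ℤ, d i = (b i : ℤ) - (rowSum F i : ℤ))
    (t : ℕ) (idx : ℕ → ℤ)
    (hidx_mono : ∀ a b : ℕ, a < b → b ≤ 2 * t → idx a < idx b)
    (hidx_range : ∀ s : ℕ, s ≤ 2 * t → idx s ∈ Finset.Icc (1 : ℤ) (m : ℤ)) :
    (horizBoundaryLen F : ℤ) ≥
      2 * n + (∑ s ∈ Finset.range t, (d (idx (2 * s)) - d (idx (2 * s + 1))))
        + 2 * d (idx (2 * t)) :=
  boundary_lower_bound_one_general m n F hF hr1 hrm b hb d hd t idx hidx_mono hidx_range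
end

section
/- Let m, n be positive integers and let F be a binary image contained in {1,…,m} × {1,…,n} with row sums r_1,…,r_m and column sums c_1,…,c_n. Define b_i = #{j ∈ {1,…,n} : c_j ≥ i} and d_i = b_i − r_i for i = 1,…,m, set d_0 = d_{m+1} = 0, and let L_h be the length of the horizontal boundary of F. Then for every integer t ≥ 0 and every choice of indices 0 ≤ i_1 < i_2 < ⋯ < i_{2t+1} ≤ m+1 one has L_h ≥ 2·r_1 + Σ_{s=1}^{t} (d_{i_{2s−1}} − d_{i_{2s}}) + 2·d_{i_{2t+1}}. -/
/-!
Split `F` into columns. A column, viewed as a finite set `S` of rows, contributes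
`[1 ≤ i ≤ #S] - [i ∈ S]` to `d_i` and one boundary edge for each start and each end of a
maximal run of `S` to `L_h`, so it suffices to prove the inequality column by column. The defect
is `+1` exactly at the holes of `S` inside `[1, #S]` and `-1` exactly at the points of `S` above
`#S`; by counting, a hole forces such a point. Scanning the chosen rows upwards, every gain of the
alternating sum is paid for by a run start above the current row (a hole followed by a point of
`S`) or by the ends of the runs that reach above `#S`, which are all released when the scan passes
`#S`. The run through row `1` lies inside `[1, #S]`, so its two edges are never used: they pay
for the term `2 r_1`.
-/

open Finset

namespace Tomography

lemma exists_crossing {P : ℤ → Prop} {a b : ℤ} (hab : a ≤ b) (ha : ¬P a) (hb : P b) :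
    ∃ k, a ≤ k ∧ k < b ∧ ¬P k ∧ P (k + 1) := by
  induction b, hab using Int.leInduction with
  | base => exact absurd hb ha
  | succ b hab ih =>
    by_cases h : P b
    · obtain ⟨k, hak, hkb, hk, hk1⟩ := ih h
      exact ⟨k, hak, by omega, hk, hk1⟩
    · exact ⟨b, hab, by omega, h, hb⟩

def runStarts (S : Finset ℤ) : Finset ℤ := {i ∈ S | i - 1 ∉ S}

def runEnds (S : Finset ℤ) : Finset ℤ := {i ∈ S | i + 1 ∉ S}

/-- The column `S` pushed down to the rows `1, …, #S`, minus the column itself; summed over the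
columns of `F` this is `d_i = b_i - r_i`. -/
def defect (S : Finset ℤ) (i : ℤ) : ℤ :=
  (if 1 ≤ i ∧ i ≤ #S then 1 else 0) - (if i ∈ S then 1 else 0)

/- The potential bounds what the rows `≥ x` can still contribute: run starts in rows `≥ 2` above
`x`, plus, while `x ≤ #S`, the ends of the runs that reach above `#S`. -/
def startsAbove (S : Finset ℤ) (x : ℤ) : ℕ := #{u ∈ runStarts S | 1 < u ∧ x < u}

def overflowEnds (S : Finset ℤ) : ℕ := #{k ∈ runEnds S | (#S : ℤ) < k}

def potential (S : Finset ℤ) (x : ℤ) : ℤ :=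
  startsAbove S x + if x ≤ #S then (overflowEnds S : ℤ) else 0

section Column

variable {S : Finset ℤ}

lemma defect_eq_zero_of_subset_Icc {M i : ℤ} (hS : S ⊆ Icc 1 M) (hi : i < 1 ∨ M < i) :
    defect S i = 0 := by
  have hc := card_le_card hS
  rw [Int.card_Icc] at hc
  have hiS : i ∉ S := fun h => by have := mem_Icc.1 (hS h); omega
  simp only [defect, hiS, if_false]
  split_ifs <;> omega

lemma exists_mem_runStarts {a b : ℤ} (hab : a ≤ b) (ha : a ∉ S) (hb : b ∈ S) :
    ∃ u ∈ runStarts S, a < u ∧ u ≤ b := by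
  obtain ⟨k, hak, hkb, hk, hk1⟩ := exists_crossing (P := (· ∈ S)) hab ha hb
  exact ⟨k + 1, mem_filter.2 ⟨hk1, by simpa using hk⟩, by omega, by omega⟩

lemma exists_mem_runEnds {a b : ℤ} (hab : a ≤ b) (ha : a ∈ S) (hb : b ∉ S) :
    ∃ k ∈ runEnds S, a ≤ k ∧ k < b := by
  obtain ⟨k, hak, hkb, hk, hk1⟩ := exists_crossing (P := (· ∉ S)) hab (not_not.2 ha) hb
  exact ⟨k, mem_filter.2 ⟨not_not.1 hk, hk1⟩, hak, hkb⟩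

lemma max'_mem_runEnds (hS : S.Nonempty) : S.max' hS ∈ runEnds S :=
  mem_filter.2 ⟨max'_mem S hS, fun h => by linarith [le_max' S _ h]⟩

lemma exists_mem_gt_card_of_hole (hS : ∀ i ∈ S, 1 ≤ i) {a : ℤ} (h1a : 1 ≤ a) (hac : a ≤ #S)
    (ha : a ∉ S) : ∃ u ∈ S, (#S : ℤ) < u := by
  by_contra! h
  have hsub : S ⊆ (Icc 1 (#S : ℤ)).erase a := fun i hi =>
    mem_erase.2 ⟨by rintro rfl; exact ha hi, mem_Icc.2 ⟨hS i hi, h i hi⟩⟩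
  have := card_le_card hsub
  rw [card_erase_of_mem (mem_Icc.2 ⟨h1a, hac⟩), Int.card_Icc] at this
  omega

lemma exists_mem_runEnds_le_card (h1 : 1 ∈ S) : ∃ k ∈ runEnds S, k ≤ #S := by
  obtain ⟨b, hb, hbS⟩ : ∃ b ∈ Icc 1 ((#S : ℤ) + 1), b ∉ S := by
    by_contra! h
    have := card_le_card (fun b hb => h b hb : Icc 1 ((#S : ℤ) + 1) ⊆ S)
    rw [Int.card_Icc] at this
    omega
  obtain ⟨k, hk, -, hkb⟩ := exists_mem_runEnds (mem_Icc.1 hb).1 h1 hbS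
  exact ⟨k, hk, by linarith [(mem_Icc.1 hb).2]⟩

lemma startsAbove_anti {x y : ℤ} (hxy : x ≤ y) : startsAbove S y ≤ startsAbove S x :=
  card_le_card fun u hu => by
    simp only [mem_filter] at hu ⊢
    exact ⟨hu.1, hu.2.1, by omega⟩

lemma startsAbove_lt {a b : ℤ} (h1a : 1 ≤ a) (hab : a ≤ b) (ha : a ∉ S) (hb : b ∈ S) :
    startsAbove S b < startsAbove S a := by
  obtain ⟨u, hu, hau, hub⟩ := exists_mem_runStarts hab ha hb
  refine card_lt_card (ssubset_iff_of_subset (fun v hv => ?_) |>.2 ⟨u, ?_, fun h => ?_⟩)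
  · simp only [mem_filter] at hv ⊢
    exact ⟨hv.1, hv.2.1, by omega⟩
  · exact mem_filter.2 ⟨hu, by omega, hau⟩
  · simp only [mem_filter] at h
    omega

lemma one_le_overflowEnds {u : ℤ} (hu : u ∈ S) (hcu : (#S : ℤ) < u) : 1 ≤ overflowEnds S :=
  card_pos.2 ⟨S.max' ⟨u, hu⟩,
    mem_filter.2 ⟨max'_mem_runEnds _, hcu.trans_le (le_max' S u hu)⟩⟩

lemma potential_anti {x y : ℤ} (hxy : x ≤ y) : potential S y ≤ potential S x := by
  have := startsAbove_anti (S := S) hxy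
  unfold potential
  split_ifs <;> omega

lemma potential_add_le (hS : ∀ i ∈ S, 1 ≤ i) (x : ℤ) :
    potential S x + 2 * (if 1 ∈ S then 1 else 0) ≤ #(runStarts S) + #(runEnds S) := by
  have hN : startsAbove S x + (if 1 ∈ S then 1 else 0) ≤ #(runStarts S) := by
    split_ifs with h1
    · refine card_lt_card (filter_ssubset.2 ⟨1, mem_filter.2 ⟨h1, fun h0 => ?_⟩, by simp⟩)
      linarith [hS _ h0]
    · exact add_zero (startsAbove S x) ▸ card_filter_le _ _
  have hK : overflowEnds S + (if 1 ∈ S then 1 else 0) ≤ #(runEnds S) := by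
    split_ifs with h1
    · obtain ⟨k, hk, hkc⟩ := exists_mem_runEnds_le_card h1
      exact card_lt_card (filter_ssubset.2 ⟨k, hk, by omega⟩)
    · exact add_zero (overflowEnds S) ▸ card_filter_le _ _
  unfold potential
  split_ifs at * <;> omega

lemma one_le_overflowEnds_of_hole (hS : ∀ i ∈ S, 1 ≤ i) {a : ℤ} (h1a : 1 ≤ a) (hac : a ≤ #S)
    (ha : a ∉ S) : 1 ≤ overflowEnds S :=
  let ⟨_, hu, hcu⟩ := exists_mem_gt_card_of_hole hS h1a hac ha
  one_le_overflowEnds hu hcu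

lemma two_mul_defect_le_potential (hS : ∀ i ∈ S, 1 ≤ i) (l : ℤ) :
    2 * defect S l ≤ potential S l := by
  unfold defect potential
  by_cases hl : 1 ≤ l ∧ l ≤ #S ∧ l ∉ S
  · obtain ⟨h1l, hlc, hlS⟩ := hl
    obtain ⟨u, hu, hcu⟩ := exists_mem_gt_card_of_hole hS h1l hlc hlS
    have := startsAbove_lt h1l (by omega) hlS hu
    have := one_le_overflowEnds hu hcu
    simp only [h1l, hlc, hlS, and_self, if_true, if_false]
    omega
  · by_cases hlS : l ∈ S <;>
      simp only [hlS, if_true, if_false, not_true_eq_false, not_false_eq_true, and_true,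
        and_false] at hl ⊢ <;> split_ifs <;> omega

lemma defect_sub_add_potential_le (hS : ∀ i ∈ S, 1 ≤ i) {a b : ℤ} (hab : a ≤ b) :
    defect S a - defect S b + potential S b ≤ potential S a := by
  have hN := startsAbove_anti (S := S) hab
  have hKa := one_le_overflowEnds_of_hole hS (a := a)
  have hKb : b ∈ S → (#S : ℤ) < b → 1 ≤ overflowEnds S := one_le_overflowEnds
  have hNlt : 1 ≤ a → a ∉ S → b ∈ S → startsAbove S b < startsAbove S a :=
    fun h1a ha hb => startsAbove_lt h1a hab ha hb
  have hb1 : b ∈ S → 1 ≤ b := hS b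
  unfold defect potential
  by_cases ha : a ∈ S <;> by_cases hb : b ∈ S <;>
    simp only [ha, hb, if_true, if_false, not_true_eq_false, not_false_eq_true, true_implies,
      false_implies, implies_true] at hKa hKb hNlt hb1 ⊢ <;>
    split_ifs <;> omega

lemma alternating_sum_le_potential (hS : ∀ i ∈ S, 1 ≤ i) (t : ℕ) (p : ℕ → ℤ)
    (hp : ∀ k < 2 * t, p k ≤ p (k + 1)) :
    ∑ s ∈ range t, (defect S (p (2 * s)) - defect S (p (2 * s + 1))) + 2 * defect S (p (2 * t))
      ≤ potential S (p 0) := by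
  induction t generalizing p with
  | zero => simpa using two_mul_defect_le_potential hS (p 0)
  | succ t ih =>
    have htail := ih (fun k => p (k + 2)) fun k hk => hp (k + 2) (by omega)
    simp only [zero_add, show ∀ s, 2 * s + 2 = 2 * (s + 1) from fun _ => rfl,
      show ∀ s, 2 * s + 1 + 2 = 2 * (s + 1) + 1 from fun _ => rfl] at htail
    have hstep := defect_sub_add_potential_le hS (hp 0 (by omega))
    have hanti := potential_anti (S := S) (hp 1 (by omega))
    rw [sum_range_succ']
    simp only [mul_zero, zero_add] at hstep ⊢
    linarith

theorem column_bound (hS : ∀ i ∈ S, 1 ≤ i) (t : ℕ) (p : ℕ → ℤ)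
    (hp : ∀ k < 2 * t, p k ≤ p (k + 1)) :
    2 * (if 1 ∈ S then 1 else 0)
        + ∑ s ∈ range t, (defect S (p (2 * s)) - defect S (p (2 * s + 1)))
        + 2 * defect S (p (2 * t))
      ≤ #(runStarts S) + #(runEnds S) := by
  linarith [alternating_sum_le_potential hS t p hp, potential_add_le hS (p 0)]

theorem sum_column_bound {J : Finset ℤ} (S : ℤ → Finset ℤ) (hS : ∀ j ∈ J, ∀ i ∈ S j, 1 ≤ i)
    (t : ℕ) (p : ℕ → ℤ) (hp : ∀ k < 2 * t, p k ≤ p (k + 1)) (D : ℤ → ℤ)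
    (hD : ∀ k ≤ 2 * t, D (p k) = ∑ j ∈ J, defect (S j) (p k)) :
    2 * ∑ j ∈ J, (if 1 ∈ S j then 1 else 0)
        + ∑ s ∈ range t, (D (p (2 * s)) - D (p (2 * s + 1))) + 2 * D (p (2 * t))
      ≤ ∑ j ∈ J, ((#(runStarts (S j)) + #(runEnds (S j)) : ℕ) : ℤ) := by
  calc _ = ∑ j ∈ J, (2 * (if 1 ∈ S j then 1 else 0)
        + ∑ s ∈ range t, (defect (S j) (p (2 * s)) - defect (S j) (p (2 * s + 1)))
        + 2 * defect (S j) (p (2 * t))) := by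
        rw [hD _ le_rfl, sum_congr (s₁ := range t) rfl fun s hs => by
          rw [hD (2 * s) (by simp at hs; omega), hD (2 * s + 1) (by simp at hs; omega)]]
        simp only [sum_add_distrib, mul_sum, sum_sub_distrib]
        rw [sum_comm (s := range t), sum_comm (s := range t)]
    _ ≤ _ := sum_le_sum fun j hj => by
        push_cast
        exact column_bound (hS j hj) t p hp

end Column

def colSet (F : Finset (ℤ × ℤ)) (j : ℤ) : Finset ℤ := {p ∈ F | p.2 = j}.image Prod.fst

section Image

variable {F : Finset (ℤ × ℤ)}

@[simp]
lemma mem_colSet {i j : ℤ} : i ∈ colSet F j ↔ (i, j) ∈ F := by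
  simp [colSet]

lemma injOn_fst_column (j : ℤ) :
    Set.InjOn Prod.fst (({p ∈ F | p.2 = j} : Finset _) : Set (ℤ × ℤ)) :=
  fun _ hp _ hq h => Prod.ext h ((mem_filter.1 hp).2.trans (mem_filter.1 hq).2.symm)

lemma card_colSet (j : ℤ) : #(colSet F j) = colSum F j :=
  card_image_of_injOn (injOn_fst_column j)

lemma sum_eq_sum_colSet {M : Type*} [AddCommMonoid M] {J : Finset ℤ} (hF : ∀ p ∈ F, p.2 ∈ J)
    (φ : ℤ × ℤ → M) : ∑ p ∈ F, φ p = ∑ j ∈ J, ∑ i ∈ colSet F j, φ (i, j) := by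
  rw [← sum_fiberwise_of_maps_to hF]
  refine sum_congr rfl fun j _ => ?_
  rw [colSet, sum_image (injOn_fst_column j)]
  exact sum_congr rfl fun p hp => by rw [← (mem_filter.1 hp).2]

lemma rowSum_eq_sum {J : Finset ℤ} (hF : ∀ p ∈ F, p.2 ∈ J) (i : ℤ) :
    (rowSum F i : ℤ) = ∑ j ∈ J, if i ∈ colSet F j then 1 else 0 := by
  rw [rowSum, card_filter, Nat.cast_sum, sum_eq_sum_colSet hF]
  simp

lemma horizBoundaryLen_eq_card :
    horizBoundaryLen F = #{p ∈ F | (p.1 - 1, p.2) ∉ F} + #{p ∈ F | (p.1 + 1, p.2) ∉ F} := by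
  have hset : {q : (ℤ × ℤ) × (ℤ × ℤ) | q.1.2 = q.2.2 ∧ |q.1.1 - q.2.1| = 1 ∧ q.1 ∈ F ∧ q.2 ∉ F}
      = (fun p => (p, (p.1 - 1, p.2))) '' ↑{p ∈ F | (p.1 - 1, p.2) ∉ F}
        ∪ (fun p => (p, (p.1 + 1, p.2))) '' ↑{p ∈ F | (p.1 + 1, p.2) ∉ F} := by
    ext ⟨⟨i, j⟩, ⟨i', j'⟩⟩
    simp only [Set.mem_ofPred_eq, Set.mem_union, Set.mem_image, coe_filter, Prod.mk.injEq]
    constructor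
    · rintro ⟨rfl, h1, hF, hF'⟩
      rcases abs_eq (zero_le_one' ℤ) |>.1 h1 with h | h
      · exact Or.inl ⟨(i, j), ⟨hF, by rwa [show i - 1 = i' by omega]⟩, rfl, by omega, rfl⟩
      · exact Or.inr ⟨(i, j), ⟨hF, by rwa [show i + 1 = i' by omega]⟩, rfl, by omega, rfl⟩
    · rintro (⟨_, ⟨hF, hF'⟩, rfl, rfl, rfl⟩ | ⟨_, ⟨hF, hF'⟩, rfl, rfl, rfl⟩) <;>
        exact ⟨rfl, by norm_num, hF, hF'⟩
  rw [horizBoundaryLen, hset, Set.ncard_union_eq,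
    Set.ncard_image_of_injective _ fun _ _ h => (Prod.mk.inj h).1,
    Set.ncard_image_of_injective _ fun _ _ h => (Prod.mk.inj h).1,
    Set.ncard_coe_finset, Set.ncard_coe_finset]
  refine Set.disjoint_left.2 ?_
  rintro _ ⟨p, -, rfl⟩ ⟨q, -, h⟩
  simp only [Prod.mk.injEq] at h
  obtain ⟨rfl, h, -⟩ := h
  omega

lemma card_filter_eq_sum {J : Finset ℤ} (hF : ∀ p ∈ F, p.2 ∈ J) (P : ℤ × ℤ → Prop)
    [DecidablePred P] : #{p ∈ F | P p} = ∑ j ∈ J, #{i ∈ colSet F j | P (i, j)} := by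
  simp only [card_filter, sum_eq_sum_colSet hF]

lemma horizBoundaryLen_eq_sum {J : Finset ℤ} (hF : ∀ p ∈ F, p.2 ∈ J) :
    horizBoundaryLen F = ∑ j ∈ J, (#(runStarts (colSet F j)) + #(runEnds (colSet F j))) := by
  rw [horizBoundaryLen_eq_card, card_filter_eq_sum hF, card_filter_eq_sum hF, ← sum_add_distrib]
  simp only [runStarts, runEnds, mem_colSet]

lemma sum_defect_colSet {J : Finset ℤ} (hF : ∀ p ∈ F, p.2 ∈ J) {i : ℤ} (hi : 1 ≤ i) :
    ∑ j ∈ J, defect (colSet F j) i = (#{j ∈ J | i ≤ (colSum F j : ℤ)} : ℤ) - rowSum F i := by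
  simp only [defect, sum_sub_distrib, rowSum_eq_sum hF, card_filter, card_colSet, hi, true_and]
  push_cast
  rfl

end Image

end Tomography

open Tomography

/-- `idx 0, idx 1, …, idx (2t)` play the role of `i_1 < i_2 < ⋯ < i_{2t+1}`. -/
theorem boundary_lower_bound_general_one_general (m n : ℕ)
    (F : Finset (ℤ × ℤ))
    (hF : ∀ p ∈ F, p.1 ∈ Finset.Icc (1 : ℤ) (m : ℤ) ∧ p.2 ∈ Finset.Icc (1 : ℤ) (n : ℤ))
    (b : ℤ → ℕ)
    (hb : ∀ i : ℤ, b i = ((Finset.Icc (1 : ℤ) (n : ℤ)).filter fun j => i ≤ (colSum F j : ℤ)).card)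
    (d : ℤ → ℤ)
    (hd : ∀ i : ℤ, 1 ≤ i → i ≤ (m : ℤ) → d i = (b i : ℤ) - (rowSum F i : ℤ))
    (hd0 : d 0 = 0) (hdm1 : d ((m : ℤ) + 1) = 0)
    (t : ℕ) (idx : ℕ → ℤ)
    (hidx_mono : ∀ a b : ℕ, a < b → b ≤ 2 * t → idx a < idx b)
    (hidx_range : ∀ s : ℕ, s ≤ 2 * t → idx s ∈ Finset.Icc (0 : ℤ) ((m : ℤ) + 1)) :
    (horizBoundaryLen F : ℤ) ≥
      2 * (rowSum F 1 : ℤ)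
        + (∑ s ∈ Finset.range t, (d (idx (2 * s)) - d (idx (2 * s + 1))))
        + 2 * d (idx (2 * t)) := by
  have hcol : ∀ p ∈ F, p.2 ∈ Icc (1 : ℤ) n := fun p hp => (hF p hp).2
  have hrows : ∀ j, colSet F j ⊆ Icc 1 (m : ℤ) := fun j i hi => (hF _ (mem_colSet.1 hi)).1
  have hd_sum : ∀ i ∈ Icc (0 : ℤ) (m + 1), d i = ∑ j ∈ Icc 1 (n : ℤ), defect (colSet F j) i := by
    intro i hi
    obtain ⟨h0, hm1⟩ := mem_Icc.1 hi
    by_cases hin : 1 ≤ i ∧ i ≤ m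
    · rw [hd i hin.1 hin.2, sum_defect_colSet hcol hin.1, hb]
    · rw [sum_eq_zero fun j _ => defect_eq_zero_of_subset_Icc (hrows j) (by omega)]
      obtain rfl | rfl : i = 0 ∨ i = m + 1 := by omega
      exacts [hd0, hdm1]
  rw [ge_iff_le, horizBoundaryLen_eq_sum hcol, rowSum_eq_sum hcol]
  exact_mod_cast sum_column_bound (colSet F) (fun j _ i hi => (mem_Icc.1 (hrows j hi)).1) t idx
    (fun k hk => (hidx_mono k (k + 1) (by omega) hk).le) d fun k hk => hd_sum _ (hidx_range k hk)

/-- Corollary 1, inequality (3): the general lower bound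
`L_h ≥ 2 r_1 + d_{i_1} - d_{i_2} + d_{i_3} - ⋯ - d_{i_{2t}} + 2 d_{i_{2t+1}}`,
where now `d_0 = d_{m+1} = 0` and indices are chosen from `{0, 1, …, m, m+1}`.
Here `idx 0, idx 1, …, idx (2t)` play the role of `i_1 < i_2 < ⋯ < i_{2t+1}`. -/
theorem boundary_lower_bound_general_one (m n : ℕ) (hm : 0 < m) (hn : 0 < n)
    (F : Finset (ℤ × ℤ))
    (hF : ∀ p ∈ F, p.1 ∈ Finset.Icc (1 : ℤ) (m : ℤ) ∧ p.2 ∈ Finset.Icc (1 : ℤ) (n : ℤ))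
    (b : ℤ → ℕ)
    (hb : ∀ i : ℤ, b i = ((Finset.Icc (1 : ℤ) (n : ℤ)).filter fun j => i ≤ (colSum F j : ℤ)).card)
    (d : ℤ → ℤ)
    (hd : ∀ i : ℤ, 1 ≤ i → i ≤ (m : ℤ) → d i = (b i : ℤ) - (rowSum F i : ℤ))
    (hd0 : d 0 = 0) (hdm1 : d ((m : ℤ) + 1) = 0)
    (t : ℕ) (idx : ℕ → ℤ)
    (hidx_mono : ∀ a b : ℕ, a < b → b ≤ 2 * t → idx a < idx b)
    (hidx_range : ∀ s : ℕ, s ≤ 2 * t → idx s ∈ Finset.Icc (0 : ℤ) ((m : ℤ) + 1)) :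
    (horizBoundaryLen F : ℤ) ≥
      2 * (rowSum F 1 : ℤ)
        + (∑ s ∈ Finset.range t, (d (idx (2 * s)) - d (idx (2 * s + 1))))
        + 2 * d (idx (2 * t)) :=
  boundary_lower_bound_general_one_general m n F hF b hb d hd hd0 hdm1 t idx hidx_mono hidx_range
end

section
/- Let m, n be positive integers and let r_1,…,r_m and c_1,…,c_n be nonnegative integers. If there exists a binary image F contained in {1,…,m} × {1,…,n} whose row sums are r_1,…,r_m and whose column sums are c_1,…,c_n, then for every k with 1 ≤ k ≤ m one has Σ_{i=1}^{k} b_i ≥ Σ_{i=1}^{k} r_i, where b_i = #{j ∈ {1,…,n} : c_j ≥ i}. (Here the row sums r_1,…,r_m are not assumed to be in non-increasing order.) -/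
/-!
Count the points of `F` lying in the first `k` rows. Grouped by rows they number
`r_1 + ⋯ + r_k`. Grouped by columns, column `j` contributes at most `min k c_j`, since it holds
`c_j` points and at most one per row; and `min k c_j = #{i ≤ k : c_j ≥ i}`, so summing over `j`
and exchanging the order of summation gives `b_1 + ⋯ + b_k`.
-/

open Finset

lemma card_filter_snd_eq_le_card_of_fst_mem {α β : Type*} [DecidableEq β]
    {G : Finset (α × β)} {s : Finset α}
    (hG : ∀ p ∈ G, p.1 ∈ s) (j : β) : #{p ∈ G | p.2 = j} ≤ #s := by
  refine card_le_card_of_injOn Prod.fst (fun p hp => hG p (mem_filter.mp hp).1) ?_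
  intro p hp q hq hpq
  exact Prod.ext hpq ((mem_filter.mp hp).2.trans (mem_filter.mp hq).2.symm)

theorem sum_rowSum_le_sum_min_colSum (F : Finset (ℤ × ℤ)) (s t : Finset ℤ)
    (hF : ∀ p ∈ F, p.2 ∈ t) :
    ∑ i ∈ s, rowSum F i ≤ ∑ j ∈ t, min #s (colSum F j) :=
  calc ∑ i ∈ s, rowSum F i
      = #{p ∈ F | p.1 ∈ s} := sum_card_fiberwise_eq_card_filter F s Prod.fst
    _ = ∑ j ∈ t, #{p ∈ {p ∈ F | p.1 ∈ s} | p.2 = j} :=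
        card_eq_sum_card_fiberwise fun p hp => hF p (mem_filter.mp hp).1
    _ ≤ ∑ j ∈ t, min #s (colSum F j) :=
        sum_le_sum fun j _ => le_min
          (card_filter_snd_eq_le_card_of_fst_mem (fun _ hp => (mem_filter.mp hp).2) j)
          (card_le_card (filter_subset_filter _ (filter_subset _ F)))

lemma Int.card_filter_Icc_one_le (k : ℤ) (c : ℕ) :
    #{i ∈ Icc (1 : ℤ) k | i ≤ (c : ℤ)} = min #(Icc (1 : ℤ) k) c := by
  have hfilter : {i ∈ Icc (1 : ℤ) k | i ≤ (c : ℤ)} = Icc 1 (min k c) := by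
    ext i
    simp only [mem_filter, mem_Icc, le_min_iff, and_assoc]
  rw [hfilter, Int.card_Icc, Int.card_Icc]
  omega

theorem ryser_consequence_general (m n : ℕ)
    (r c : ℤ → ℕ)
    (hex : ∃ F : Finset (ℤ × ℤ),
      (∀ p ∈ F, p.1 ∈ Finset.Icc (1 : ℤ) (m : ℤ) ∧ p.2 ∈ Finset.Icc (1 : ℤ) (n : ℤ)) ∧
      (∀ i ∈ Finset.Icc (1 : ℤ) (m : ℤ), rowSum F i = r i) ∧
      (∀ j ∈ Finset.Icc (1 : ℤ) (n : ℤ), colSum F j = c j))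
    (k : ℤ) (hkm : k ≤ (m : ℤ)) :
    ∑ i ∈ Finset.Icc (1 : ℤ) k, r i ≤
      ∑ i ∈ Finset.Icc (1 : ℤ) k,
        ((Finset.Icc (1 : ℤ) (n : ℤ)).filter fun j => i ≤ (c j : ℤ)).card := by
  obtain ⟨F, hF, hr, hc⟩ := hex
  calc ∑ i ∈ Icc (1 : ℤ) k, r i
      = ∑ i ∈ Icc (1 : ℤ) k, rowSum F i :=
        sum_congr rfl fun i hi => (hr i (Icc_subset_Icc le_rfl hkm hi)).symm
    _ ≤ ∑ j ∈ Icc (1 : ℤ) n, min #(Icc (1 : ℤ) k) (colSum F j) :=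
        sum_rowSum_le_sum_min_colSum F _ _ fun p hp => (hF p hp).2
    _ = ∑ j ∈ Icc (1 : ℤ) n, #{i ∈ Icc (1 : ℤ) k | i ≤ (c j : ℤ)} :=
        sum_congr rfl fun j hj => by rw [hc j hj, Int.card_filter_Icc_one_le]
    _ = _ :=
        (sum_card_bipartiteAbove_eq_sum_card_bipartiteBelow (r := fun i j => i ≤ (c j : ℤ))).symm

/-- Consequence of Ryser's theorem: if nonnegative integers `r_1, …, r_m` and
`c_1, …, c_n` are the row and column sums of some binary image in the
`m × n` grid, then `Σ_{i=1}^k b_i ≥ Σ_{i=1}^k r_i` for all `1 ≤ k ≤ m`,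
where `b_i = #{j : c_j ≥ i}`. -/
theorem ryser_consequence (m n : ℕ) (hm : 0 < m) (hn : 0 < n)
    (r c : ℤ → ℕ)
    (hex : ∃ F : Finset (ℤ × ℤ),
      (∀ p ∈ F, p.1 ∈ Finset.Icc (1 : ℤ) (m : ℤ) ∧ p.2 ∈ Finset.Icc (1 : ℤ) (n : ℤ)) ∧
      (∀ i ∈ Finset.Icc (1 : ℤ) (m : ℤ), rowSum F i = r i) ∧
      (∀ j ∈ Finset.Icc (1 : ℤ) (n : ℤ), colSum F j = c j))
    (k : ℤ) (hk1 : 1 ≤ k) (hkm : k ≤ (m : ℤ)) :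
    ∑ i ∈ Finset.Icc (1 : ℤ) k, r i ≤
      ∑ i ∈ Finset.Icc (1 : ℤ) k,
        ((Finset.Icc (1 : ℤ) (n : ℤ)).filter fun j => i ≤ (c j : ℤ)).card :=
  ryser_consequence_general m n r c hex k hkm
end

section
/- Let F be a nonempty binary image. Let m be the number of rows i with nonzero row sum r_i, and let n be the number of columns j with nonzero column sum c_j. Then the total length of the boundary of F (the length of the horizontal boundary plus the length of the vertical boundary) is at least 2n + 2m. -/
/-- The length of the vertical boundary of `F`: the number of pairs
`((i,j),(i',j'))` with `i = i'`, `|j - j'| = 1`, `(i,j) ∈ F` and `(i',j') ∉ F`. -/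
noncomputable def vertBoundaryLen (F : Finset (ℤ × ℤ)) : ℕ :=
  Set.ncard {q : (ℤ × ℤ) × (ℤ × ℤ) |
    q.1.1 = q.2.1 ∧ |q.1.2 - q.2.2| = 1 ∧ q.1 ∈ F ∧ q.2 ∉ F}

lemma vertSet_finite (F : Finset (ℤ × ℤ)) :
    {q : (ℤ × ℤ) × (ℤ × ℤ) |
      q.1.1 = q.2.1 ∧ |q.1.2 - q.2.2| = 1 ∧ q.1 ∈ F ∧ q.2 ∉ F}.Finite := by
  apply Set.Finite.subset ((F.finite_toSet).prod
    ((F.image (fun p => (p.1, p.2 + 1)) ∪ F.image (fun p => (p.1, p.2 - 1))).finite_toSet))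
  rintro ⟨⟨a1, a2⟩, b1, b2⟩ ⟨h1, h2, h3, h4⟩
  simp only at h1 h2
  refine ⟨h3, ?_⟩
  simp only [Finset.coe_union, Set.mem_union, Finset.coe_image, Set.mem_image,
    Finset.mem_coe]
  rcases (abs_eq (by norm_num : (0:ℤ) ≤ 1)).mp h2 with h | h
  · right
    exact ⟨(a1, a2), h3, by simp only [Prod.mk.injEq]; omega⟩
  · left
    exact ⟨(a1, a2), h3, by simp only [Prod.mk.injEq]; omega⟩

lemma rows_finite (F : Finset (ℤ × ℤ)) : {i : ℤ | rowSum F i ≠ 0}.Finite := by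
  apply Set.Finite.subset (F.image Prod.fst).finite_toSet
  intro i hi
  simp only [Set.mem_setOf_eq, rowSum, ne_eq, Finset.card_eq_zero, ← Finset.nonempty_iff_ne_empty,
    Finset.filter_nonempty_iff] at hi
  obtain ⟨p, hp, hpi⟩ := hi
  simp only [Finset.coe_image, Set.mem_image, Finset.mem_coe]
  exact ⟨p, hp, hpi⟩

lemma vert_bound (F : Finset (ℤ × ℤ)) :
    2 * {i : ℤ | rowSum F i ≠ 0}.ncard ≤ vertBoundaryLen F := by
  classical
  set T := {q : (ℤ × ℤ) × (ℤ × ℤ) |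
    q.1.1 = q.2.1 ∧ |q.1.2 - q.2.2| = 1 ∧ q.1 ∈ F ∧ q.2 ∉ F} with hT
  set R := {i : ℤ | rowSum F i ≠ 0} with hR
  set S := fun i => (F.filter fun p => p.1 = i).image Prod.snd with hS
  have hRmem : ∀ i ∈ R, (S i).Nonempty := by
    intro i hi
    simp only [hR, Set.mem_setOf_eq, rowSum, ne_eq, Finset.card_eq_zero,
      ← Finset.nonempty_iff_ne_empty] at hi
    exact hi.image _
  have hmemF : ∀ i, ∀ j ∈ S i, (i, j) ∈ F := by
    intro i j hj
    simp only [hS, Finset.mem_image, Finset.mem_filter] at hj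
    obtain ⟨p, ⟨hp, hp1⟩, hp2⟩ := hj
    rwa [← hp1, ← hp2]
  have hmemS : ∀ i j, (i, j) ∈ F → j ∈ S i := by
    intro i j hj
    simp only [hS, Finset.mem_image, Finset.mem_filter]
    exact ⟨(i, j), ⟨hj, rfl⟩, rfl⟩
  set Tm := T ∩ {q | q.2.2 = q.1.2 - 1} with hTm
  set Tp := T ∩ {q | q.2.2 = q.1.2 + 1} with hTp
  have hfin : T.Finite := vertSet_finite F
  have hTmfin : Tm.Finite := hfin.subset Set.inter_subset_left
  have hTpfin : Tp.Finite := hfin.subset Set.inter_subset_left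
  have h1 : R.ncard ≤ Tm.ncard := by
    refine Set.ncard_le_ncard_of_injOn
      (fun i => ((i, if h : (S i).Nonempty then (S i).min' h else 0),
                 (i, (if h : (S i).Nonempty then (S i).min' h else 0) - 1)))
      ?_ ?_ hTmfin
    · intro i hi
      have hne := hRmem i hi
      simp only [dif_pos hne]
      have hminmem : (S i).min' hne ∈ S i := (S i).min'_mem hne
      refine ⟨⟨rfl, by norm_num, hmemF i _ hminmem, ?_⟩, rfl⟩
      intro hcon
      have := (S i).min'_le _ (hmemS i _ hcon)
      omega
    · intro a _ b _ h
      simpa using congrArg (fun q => q.1.1) h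
  have h2 : R.ncard ≤ Tp.ncard := by
    refine Set.ncard_le_ncard_of_injOn
      (fun i => ((i, if h : (S i).Nonempty then (S i).max' h else 0),
                 (i, (if h : (S i).Nonempty then (S i).max' h else 0) + 1)))
      ?_ ?_ hTpfin
    · intro i hi
      have hne := hRmem i hi
      simp only [dif_pos hne]
      have hmaxmem : (S i).max' hne ∈ S i := (S i).max'_mem hne
      refine ⟨⟨rfl, by norm_num, hmemF i _ hmaxmem, ?_⟩, rfl⟩
      intro hcon
      have := (S i).le_max' _ (hmemS i _ hcon)
      omega
    · intro a _ b _ h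
      simpa using congrArg (fun q => q.1.1) h
  have hdisj : Disjoint Tm Tp := by
    rw [Set.disjoint_left]
    rintro q ⟨_, hq1⟩ ⟨_, hq2⟩
    simp only [Set.mem_setOf_eq] at hq1 hq2
    omega
  have hunion : Tm.ncard + Tp.ncard ≤ T.ncard := by
    rw [← Set.ncard_union_eq hdisj hTmfin hTpfin]
    exact Set.ncard_le_ncard (Set.union_subset Set.inter_subset_left Set.inter_subset_left) hfin
  show 2 * R.ncard ≤ T.ncard
  omega

lemma swap_mem (F : Finset (ℤ × ℤ)) (p : ℤ × ℤ) :
    p ∈ F.image Prod.swap ↔ p.swap ∈ F := by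
  simp only [Finset.mem_image]
  constructor
  · rintro ⟨q, hq, rfl⟩; simpa using hq
  · intro h; exact ⟨p.swap, h, by simp⟩

lemma colSum_swap (F : Finset (ℤ × ℤ)) (j : ℤ) :
    rowSum (F.image Prod.swap) j = colSum F j := by
  unfold rowSum colSum
  rw [Finset.filter_image, Finset.card_image_of_injective _ Prod.swap_injective]
  rfl

lemma horiz_eq_vert_swap (F : Finset (ℤ × ℤ)) :
    horizBoundaryLen F = vertBoundaryLen (F.image Prod.swap) := by
  unfold horizBoundaryLen vertBoundaryLen
  rw [show {q : (ℤ × ℤ) × (ℤ × ℤ) |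
      q.1.1 = q.2.1 ∧ |q.1.2 - q.2.2| = 1 ∧ q.1 ∈ F.image Prod.swap ∧ q.2 ∉ F.image Prod.swap}
    = (fun q : (ℤ × ℤ) × (ℤ × ℤ) => (q.1.swap, q.2.swap)) ''
      {q : (ℤ × ℤ) × (ℤ × ℤ) | q.1.2 = q.2.2 ∧ |q.1.1 - q.2.1| = 1 ∧ q.1 ∈ F ∧ q.2 ∉ F} from ?_]
  · rw [Set.ncard_image_of_injective]
    rintro ⟨⟨a1, a2⟩, a3, a4⟩ ⟨⟨b1, b2⟩, b3, b4⟩ h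
    simp only [Prod.swap_prod_mk, Prod.mk.injEq] at h
    obtain ⟨⟨h1, h2⟩, h3, h4⟩ := h
    simp [h1, h2, h3, h4]
  · ext ⟨⟨a1, a2⟩, b1, b2⟩
    simp only [Set.mem_setOf_eq, Set.mem_image, swap_mem, Prod.swap_prod_mk]
    constructor
    · rintro ⟨h1, h2, h3, h4⟩
      exact ⟨((a2, a1), (b2, b1)), ⟨h1, h2, by simpa using h3, by simpa using h4⟩, rfl⟩
    · rintro ⟨⟨⟨p1, p2⟩, q1, q2⟩, ⟨h1, h2, h3, h4⟩, heq⟩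
      simp only [Prod.swap_prod_mk, Prod.mk.injEq] at heq
      obtain ⟨⟨e1, e2⟩, e3, e4⟩ := heq
      subst e1; subst e2; subst e3; subst e4
      exact ⟨h1, h2, h3, h4⟩


/-- The first simple bound: if a nonempty binary image has `m` rows with nonzero
row sum and `n` columns with nonzero column sum, then the total length of its
boundary is at least `2n + 2m`. -/
theorem boundary_simple_bound_one (F : Finset (ℤ × ℤ)) (hF : F.Nonempty)
    (m n : ℕ)
    (hm : m = {i : ℤ | rowSum F i ≠ 0}.ncard)
    (hn : n = {j : ℤ | colSum F j ≠ 0}.ncard) :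
    2 * n + 2 * m ≤ horizBoundaryLen F + vertBoundaryLen F := by
  have h1 : 2 * m ≤ vertBoundaryLen F := hm ▸ vert_bound F
  have h2 : 2 * n ≤ horizBoundaryLen F := by
    rw [horiz_eq_vert_swap, hn]
    have h : {j : ℤ | colSum F j ≠ 0} = {i : ℤ | rowSum (F.image Prod.swap) i ≠ 0} := by
      ext j; simp [colSum_swap]
    rw [h]
    exact vert_bound _
  omega
end

section
/- Let m be a positive integer and let F be a binary image all of whose points lie in rows 1,…,m, with row sums r_1,…,r_m. Then the length L_h of the horizontal boundary of F satisfies L_h ≥ r_1 + Σ_{i=1}^{m−1} |r_i − r_{i+1}| + r_m. -/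
open Finset

/-- down-boundary count at row `i`. -/
def downB (F : Finset (ℤ × ℤ)) (i : ℤ) : ℕ :=
  (F.filter fun p => p.1 = i ∧ (i - 1, p.2) ∉ F).card

/-- up-boundary count at row `i`. -/
def upB (F : Finset (ℤ × ℤ)) (i : ℤ) : ℕ :=
  (F.filter fun p => p.1 = i ∧ (i + 1, p.2) ∉ F).card

lemma horiz_eq (F : Finset (ℤ × ℤ)) :
    horizBoundaryLen F =
      (F.filter fun p => (p.1 - 1, p.2) ∉ F).card +
      (F.filter fun p => (p.1 + 1, p.2) ∉ F).card := by
  classical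
  set D := F.filter fun p => (p.1 - 1, p.2) ∉ F with hD
  set U := F.filter fun p => (p.1 + 1, p.2) ∉ F with hU
  set T : Finset ((ℤ×ℤ)×(ℤ×ℤ)) :=
    D.image (fun p => (p, (p.1 - 1, p.2))) ∪ U.image (fun p => (p, (p.1 + 1, p.2))) with hT
  have hset : {q : (ℤ × ℤ) × (ℤ × ℤ) |
      q.1.2 = q.2.2 ∧ |q.1.1 - q.2.1| = 1 ∧ q.1 ∈ F ∧ q.2 ∉ F} = ↑T := by
    ext ⟨⟨a,b⟩,⟨c,d⟩⟩
    simp only [hT, hD, hU, Set.mem_setOf_eq, coe_union, Set.mem_union, coe_image,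
      Set.mem_image, mem_coe, mem_filter, Prod.mk.injEq, Prod.exists]
    constructor
    · rintro ⟨h2, h1, hF1, hF2⟩
      obtain rfl : b = d := h2
      rcases (abs_eq (by norm_num : (0:ℤ) ≤ 1)).mp h1 with h | h
      · left
        exact ⟨a, b, ⟨hF1, by rw [show a - 1 = c by omega]; exact hF2⟩, ⟨rfl, rfl⟩, by omega, rfl⟩
      · right
        exact ⟨a, b, ⟨hF1, by rw [show a + 1 = c by omega]; exact hF2⟩, ⟨rfl, rfl⟩, by omega, rfl⟩
    · rintro (⟨x, y, ⟨hx, hnx⟩, ⟨rfl, rfl⟩, rfl, rfl⟩ | ⟨x, y, ⟨hx, hnx⟩, ⟨rfl, rfl⟩, rfl, rfl⟩) <;>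
        exact ⟨rfl, by simp, hx, hnx⟩
  rw [horizBoundaryLen, hset, Set.ncard_coe_finset, hT]
  rw [card_union_of_disjoint, card_image_of_injective, card_image_of_injective]
  · intro p q h; exact (Prod.mk.injEq _ _ _ _).mp h |>.1
  · intro p q h; exact (Prod.mk.injEq _ _ _ _).mp h |>.1
  · rw [disjoint_left]
    rintro q hq1 hq2
    simp only [mem_image] at hq1 hq2
    obtain ⟨p, _, rfl⟩ := hq1
    obtain ⟨p', _, h⟩ := hq2
    obtain ⟨rfl, h2⟩ := Prod.mk.injEq .. |>.mp h
    have := (Prod.mk.injEq .. |>.mp h2).1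
    omega

lemma cross_eq (F : Finset (ℤ × ℤ)) (i : ℤ) :
    ((F.filter fun p => p.1 = i ∧ (i+1,p.2) ∈ F)).card
      = ((F.filter fun p => p.1 = i+1 ∧ (i,p.2) ∈ F)).card := by
  classical
  apply Finset.card_bij (fun p _ => ((i+1 : ℤ), p.2))
  · rintro ⟨a,b⟩ hp
    simp only [mem_filter] at hp ⊢
    obtain ⟨hp1, rfl, hp3⟩ := hp
    simp [hp3, hp1]
  · rintro ⟨a,b⟩ ha ⟨c,d⟩ hc h
    simp only [mem_filter] at ha hc
    simp only [Prod.mk.injEq] at h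
    simp [ha.2.1, hc.2.1, h.2]
  · rintro ⟨a,b⟩ hb
    simp only [mem_filter] at hb
    obtain ⟨hb1, rfl, hb3⟩ := hb
    exact ⟨(i, b), by simp [mem_filter, hb3, hb1], rfl⟩

lemma row_split_up (F : Finset (ℤ × ℤ)) (i : ℤ) :
    rowSum F i
      = upB F i + (F.filter fun p => p.1 = i ∧ (i+1,p.2) ∈ F).card := by
  classical
  have := Finset.card_filter_add_card_filter_not
    (s := F.filter fun p => p.1 = i) (p := fun p => (i+1,p.2) ∈ F)
  simp only [Finset.filter_filter] at this
  unfold rowSum upB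
  omega

lemma row_split_down (F : Finset (ℤ × ℤ)) (i : ℤ) :
    rowSum F i
      = downB F i + (F.filter fun p => p.1 = i ∧ (i-1,p.2) ∈ F).card := by
  classical
  have := Finset.card_filter_add_card_filter_not
    (s := F.filter fun p => p.1 = i) (p := fun p => (i-1,p.2) ∈ F)
  simp only [Finset.filter_filter] at this
  unfold rowSum downB
  omega

lemma key_ineq (F : Finset (ℤ × ℤ)) (i : ℤ) :
    |(rowSum F i : ℤ) - (rowSum F (i+1) : ℤ)| ≤ (upB F i : ℤ) + (downB F (i+1) : ℤ) := by
  have h1 := row_split_up F i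
  have h2 := row_split_down F (i+1)
  have h3 := cross_eq F i
  rw [show i + 1 - 1 = i by ring] at h2
  rw [abs_le]
  constructor <;> omega


/-- The second simple bound: if all points of `F` lie in rows `1, …, m`, then
`L_h ≥ r_1 + Σ_{i=1}^{m-1} |r_i - r_{i+1}| + r_m`. -/
theorem boundary_simple_bound_two (m : ℕ) (hm : 0 < m)
    (F : Finset (ℤ × ℤ))
    (hF : ∀ p ∈ F, p.1 ∈ Finset.Icc (1 : ℤ) (m : ℤ)) :
    (horizBoundaryLen F : ℤ) ≥
      (rowSum F 1 : ℤ)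
        + (∑ i ∈ Finset.Icc (1 : ℤ) ((m : ℤ) - 1),
            |(rowSum F i : ℤ) - (rowSum F (i + 1) : ℤ)|)
        + (rowSum F (m : ℤ) : ℤ) := by
  classical
  -- fiberwise decomposition
  have hDcard : (F.filter fun p => (p.1 - 1, p.2) ∉ F).card
      = ∑ i ∈ Finset.Icc (1 : ℤ) (m : ℤ), downB F i := by
    rw [Finset.card_eq_sum_card_fiberwise
      (f := fun p => p.1) (t := Finset.Icc (1 : ℤ) (m : ℤ))
      (fun p hp => hF p (Finset.mem_filter.mp hp).1)]
    refine Finset.sum_congr rfl fun i _ => ?_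
    unfold downB
    rw [Finset.filter_filter]
    congr 1
    apply Finset.filter_congr
    rintro ⟨a,b⟩ _
    constructor
    · rintro ⟨h1, rfl⟩; exact ⟨rfl, h1⟩
    · rintro ⟨rfl, h1⟩; exact ⟨h1, rfl⟩
  have hUcard : (F.filter fun p => (p.1 + 1, p.2) ∉ F).card
      = ∑ i ∈ Finset.Icc (1 : ℤ) (m : ℤ), upB F i := by
    rw [Finset.card_eq_sum_card_fiberwise
      (f := fun p => p.1) (t := Finset.Icc (1 : ℤ) (m : ℤ))
      (fun p hp => hF p (Finset.mem_filter.mp hp).1)]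
    refine Finset.sum_congr rfl fun i _ => ?_
    unfold upB
    rw [Finset.filter_filter]
    congr 1
    apply Finset.filter_congr
    rintro ⟨a,b⟩ _
    constructor
    · rintro ⟨h1, rfl⟩; exact ⟨rfl, h1⟩
    · rintro ⟨rfl, h1⟩; exact ⟨h1, rfl⟩
  -- boundary rows
  have hd1 : downB F 1 = rowSum F 1 := by
    unfold downB rowSum
    congr 1
    apply Finset.filter_congr
    rintro ⟨a,b⟩ hp
    constructor
    · rintro ⟨h1, _⟩; exact h1
    · rintro h1
      refine ⟨h1, fun hc => ?_⟩
      have := hF _ hc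
      simp only [Finset.mem_Icc] at this
      omega
  have hum : upB F (m : ℤ) = rowSum F (m : ℤ) := by
    unfold upB rowSum
    congr 1
    apply Finset.filter_congr
    rintro ⟨a,b⟩ hp
    constructor
    · rintro ⟨h1, _⟩; exact h1
    · rintro h1
      refine ⟨h1, fun hc => ?_⟩
      have := hF _ hc
      simp only [Finset.mem_Icc] at this
      omega
  -- sum splits
  have hm1 : (1 : ℤ) ≤ (m : ℤ) := by exact_mod_cast hm
  have hIccD : Finset.Icc (1 : ℤ) (m : ℤ) = insert 1 (Finset.Icc (2 : ℤ) (m : ℤ)) := by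
    ext x; simp [Finset.mem_Icc]; omega
  have hIccU : Finset.Icc (1 : ℤ) (m : ℤ) = insert (m : ℤ) (Finset.Icc (1 : ℤ) ((m : ℤ) - 1)) := by
    ext x; simp [Finset.mem_Icc]; omega
  have hshift : ∀ g : ℤ → ℤ, ∑ i ∈ Finset.Icc (2 : ℤ) (m : ℤ), g i
      = ∑ i ∈ Finset.Icc (1 : ℤ) ((m : ℤ) - 1), g (i + 1) := by
    intro g
    rw [show (2:ℤ) = 1 + 1 by ring, show (m:ℤ) = ((m:ℤ) - 1) + 1 by ring,
      ← Finset.map_add_right_Icc, Finset.sum_map]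
    simp [addRightEmbedding]
  -- main computation
  have hL : (horizBoundaryLen F : ℤ)
      = (rowSum F 1 : ℤ) + (rowSum F (m : ℤ) : ℤ)
        + ∑ i ∈ Finset.Icc (1 : ℤ) ((m : ℤ) - 1),
            ((upB F i : ℤ) + (downB F (i + 1) : ℤ)) := by
    rw [horiz_eq, Nat.cast_add, hDcard, hUcard, Nat.cast_sum, Nat.cast_sum]
    rw [show (∑ i ∈ Finset.Icc (1 : ℤ) (m : ℤ), (downB F i : ℤ))
        = (downB F 1 : ℤ) + ∑ i ∈ Finset.Icc (2 : ℤ) (m : ℤ), (downB F i : ℤ) by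
      rw [hIccD, Finset.sum_insert (by simp)]]
    rw [show (∑ i ∈ Finset.Icc (1 : ℤ) (m : ℤ), (upB F i : ℤ))
        = (upB F (m : ℤ) : ℤ) + ∑ i ∈ Finset.Icc (1 : ℤ) ((m : ℤ) - 1), (upB F i : ℤ) by
      rw [hIccU, Finset.sum_insert (by simp)]]
    rw [hshift (fun i => (downB F i : ℤ)), hd1, hum, Finset.sum_add_distrib]
    ring
  rw [ge_iff_le, hL]
  have hsum : ∑ i ∈ Finset.Icc (1 : ℤ) ((m : ℤ) - 1),
      |(rowSum F i : ℤ) - (rowSum F (i + 1) : ℤ)|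
      ≤ ∑ i ∈ Finset.Icc (1 : ℤ) ((m : ℤ) - 1),
          ((upB F i : ℤ) + (downB F (i + 1) : ℤ)) :=
    Finset.sum_le_sum fun i _ => key_ineq F i
  linarith
end

section
/- Let n ≥ 2 be an integer and m = n + 2. Consider the column sums c_j = 2 for j = 1,…,n and the row sums r_1 = n, r_i = 1 for i = 2,…,n+1, and r_m = 0. Then: (a) every binary image F ⊆ {1,…,m} × {1,…,n} with these row and column sums has horizontal boundary of length L_h ≥ 4n − 2; and (b) there exists such a binary image F with L_h = 4n − 2. -/
/-- `F ⊆ {1,…,m} × {1,…,n}` has the line sums of Example 4: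
column sums `c_j = 2` for `j = 1,…,n` and row sums `r_1 = n`, `r_i = 1` for
`i = 2,…,n+1`, `r_m = 0` (where `m = n + 2`). -/
def example4Image (m n : ℕ) (F : Finset (ℤ × ℤ)) : Prop :=
  (∀ p ∈ F, p.1 ∈ Finset.Icc (1 : ℤ) (m : ℤ) ∧ p.2 ∈ Finset.Icc (1 : ℤ) (n : ℤ)) ∧
  rowSum F 1 = n ∧
  (∀ i : ℤ, 2 ≤ i → i ≤ (n : ℤ) + 1 → rowSum F i = 1) ∧
  rowSum F (m : ℤ) = 0 ∧
  (∀ j : ℤ, 1 ≤ j → j ≤ (n : ℤ) → colSum F j = 2)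

/-- The horizontal boundary of a finite image is a finite set. -/
lemma boundary_finite (F : Finset (ℤ × ℤ)) :
    {q : (ℤ × ℤ) × (ℤ × ℤ) |
      q.1.2 = q.2.2 ∧ |q.1.1 - q.2.1| = 1 ∧ q.1 ∈ F ∧ q.2 ∉ F}.Finite := by
  apply Set.Finite.subset (F ×ˢ (F.image (fun p => (p.1 + 1, p.2)) ∪
      F.image (fun p => (p.1 - 1, p.2)))).finite_toSet
  rintro ⟨p, p'⟩ ⟨hcol, habs, hp, hp'⟩
  have hcol' : p.2 = p'.2 := hcol
  have habs' : |p.1 - p'.1| = 1 := habs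
  have hpF : p ∈ F := hp
  simp only [Finset.coe_product, Set.mem_prod, Finset.mem_coe, Finset.mem_union,
    Finset.mem_image]
  rcases (abs_eq (by norm_num : (0:ℤ) ≤ 1)).mp habs' with h | h
  · refine ⟨hpF, Or.inr ⟨p, hpF, ?_⟩⟩
    have h1 : p.1 - 1 = p'.1 := by omega
    rw [Prod.ext_iff]
    exact ⟨h1, hcol'⟩
  · refine ⟨hpF, Or.inl ⟨p, hpF, ?_⟩⟩
    have h1 : p.1 + 1 = p'.1 := by omega
    rw [Prod.ext_iff]
    exact ⟨h1, hcol'⟩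

lemma partA (n : ℕ) (hn : 2 ≤ n) (F : Finset (ℤ × ℤ))
    (hF : example4Image (n + 2) n F) : 4 * n - 2 ≤ horizBoundaryLen F := by
  obtain ⟨hbox, hr1, hri, hrm, hc⟩ := hF
  -- row 1 is full
  have hrow1 : ∀ j : ℤ, 1 ≤ j → j ≤ (n : ℤ) → ((1 : ℤ), j) ∈ F := by
    have key : F.filter (fun p => p.1 = 1) = ({1} : Finset ℤ) ×ˢ Finset.Icc (1 : ℤ) n := by
      apply Finset.eq_of_subset_of_card_le
      · intro p hp
        rw [Finset.mem_filter] at hp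
        rw [Finset.mem_product, Finset.mem_singleton]
        exact ⟨hp.2, (hbox p hp.1).2⟩
      · rw [Finset.card_product, Finset.card_singleton, one_mul, Int.card_Icc]
        have : rowSum F 1 = n := hr1
        rw [rowSum] at this
        omega
    intro j hj1 hjn
    have : ((1 : ℤ), j) ∈ F.filter (fun p => p.1 = 1) := by
      rw [key, Finset.mem_product, Finset.mem_singleton, Finset.mem_Icc]
      exact ⟨rfl, hj1, hjn⟩
    exact (Finset.mem_filter.mp this).1
  -- row m is empty
  have hrowm : ∀ j : ℤ, (((n : ℤ) + 2), j) ∉ F := by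
    intro j hj
    have : (((n : ℤ) + 2), j) ∈ F.filter (fun p => p.1 = ((n + 2 : ℕ) : ℤ)) := by
      rw [Finset.mem_filter]; exact ⟨hj, by push_cast; ring⟩
    have h0 : rowSum F ((n + 2 : ℕ) : ℤ) = 0 := hrm
    rw [rowSum, Finset.card_eq_zero] at h0
    rw [h0] at this
    exact absurd this (Finset.notMem_empty _)
  -- row 2 has a unique point
  have hrow2 : ∃ j0 : ℤ, 1 ≤ j0 ∧ j0 ≤ (n : ℤ) ∧ ∀ j : ℤ, ((2 : ℤ), j) ∈ F ↔ j = j0 := by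
    have h1 : rowSum F 2 = 1 := hri 2 le_rfl (by push_cast; omega)
    rw [rowSum, Finset.card_eq_one] at h1
    obtain ⟨p0, hp0⟩ := h1
    have hp0m : p0 ∈ F.filter (fun p => p.1 = 2) := by rw [hp0]; exact Finset.mem_singleton_self _
    rw [Finset.mem_filter] at hp0m
    obtain ⟨hp0F, hp01⟩ := hp0m
    have hbb := (hbox p0 hp0F).2
    rw [Finset.mem_Icc] at hbb
    refine ⟨p0.2, hbb.1, hbb.2, fun j => ?_⟩
    constructor
    · intro hj
      have : ((2 : ℤ), j) ∈ F.filter (fun p => p.1 = 2) := by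
        rw [Finset.mem_filter]; exact ⟨hj, rfl⟩
      rw [hp0, Finset.mem_singleton] at this
      rw [← this]
    · intro hj
      subst hj
      have : p0 = ((2 : ℤ), p0.2) := by ext <;> simp [hp01]
      rw [← this]; exact hp0F
  obtain ⟨j0, hj01, hj0n, hj0⟩ := hrow2
  -- each column has a unique second point
  have hcolx : ∀ j : ℤ, ∃ i : ℤ, 1 ≤ j → j ≤ (n : ℤ) →
      2 ≤ i ∧ i ≤ (n : ℤ) + 1 ∧ (i, j) ∈ F ∧
      ∀ i' : ℤ, (i', j) ∈ F → i' = 1 ∨ i' = i := by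
    intro j
    by_cases hj : 1 ≤ j ∧ j ≤ (n : ℤ)
    · obtain ⟨hj1, hjn⟩ := hj
      have hB : (F.filter fun p => p.2 = j).card = 2 := hc j hj1 hjn
      have h1 : ((1 : ℤ), j) ∈ F.filter (fun p => p.2 = j) := by
        rw [Finset.mem_filter]; exact ⟨hrow1 j hj1 hjn, rfl⟩
      obtain ⟨p, hpB, hpne⟩ := Finset.exists_mem_ne
        (s := F.filter fun p => p.2 = j) (by omega) ((1 : ℤ), j)
      rw [Finset.mem_filter] at hpB
      obtain ⟨hpF, hpj⟩ := hpB
      have hp1 : p.1 ≠ 1 := by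
        intro h
        apply hpne
        ext
        · exact h
        · exact hpj
      have hbb := (hbox p hpF).1
      rw [Finset.mem_Icc] at hbb
      have hple : p.1 ≤ (n : ℤ) + 1 := by
        rcases lt_or_ge p.1 ((n : ℤ) + 2) with h | h
        · omega
        · exfalso
          have : p.1 = (n : ℤ) + 2 := by push_cast at hbb; omega
          apply hrowm j
          have : p = (((n : ℤ) + 2), j) := by ext <;> simp [this, hpj]
          rw [← this]; exact hpF
      refine ⟨p.1, fun _ _ => ⟨by omega, hple, ?_, ?_⟩⟩
      · have : p = (p.1, j) := by ext <;> simp [hpj]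
        rw [← this]; exact hpF
      · intro i' hi'
        have hsub : ({((1 : ℤ), j), p} : Finset (ℤ × ℤ)) ⊆ F.filter (fun p => p.2 = j) := by
          intro x hx
          rw [Finset.mem_insert, Finset.mem_singleton] at hx
          rcases hx with rfl | rfl
          · exact h1
          · rw [Finset.mem_filter]; exact ⟨hpF, hpj⟩
        have hcard2 : ({((1 : ℤ), j), p} : Finset (ℤ × ℤ)).card = 2 :=
          Finset.card_pair (fun h => hpne h.symm)
        have heq : ({((1 : ℤ), j), p} : Finset (ℤ × ℤ)) = F.filter (fun p => p.2 = j) :=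
          Finset.eq_of_subset_of_card_le hsub (by omega)
        have : (i', j) ∈ ({((1 : ℤ), j), p} : Finset (ℤ × ℤ)) := by
          rw [heq, Finset.mem_filter]; exact ⟨hi', rfl⟩
        rw [Finset.mem_insert, Finset.mem_singleton] at this
        rcases this with h | h
        · left; exact congrArg Prod.fst h
        · right; exact congrArg Prod.fst h
    · exact ⟨0, fun h1 h2 => absurd ⟨h1, h2⟩ hj⟩
  choose g hg using hcolx
  -- the witness finset of boundary elements
  set S1 : Finset ((ℤ × ℤ) × (ℤ × ℤ)) :=
    (Finset.Icc (1 : ℤ) n).image (fun j => (((1 : ℤ), j), ((0 : ℤ), j))) with hS1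
  set S2 : Finset ((ℤ × ℤ) × (ℤ × ℤ)) :=
    ((Finset.Icc (1 : ℤ) n).erase j0).image (fun j => (((1 : ℤ), j), ((2 : ℤ), j))) with hS2
  set S3 : Finset ((ℤ × ℤ) × (ℤ × ℤ)) :=
    (Finset.Icc (1 : ℤ) n).image (fun j => ((g j, j), (g j + 1, j))) with hS3
  set S4 : Finset ((ℤ × ℤ) × (ℤ × ℤ)) :=
    ((Finset.Icc (1 : ℤ) n).erase j0).image (fun j => ((g j, j), (g j - 1, j))) with hS4
  have hg2 : ∀ j : ℤ, 1 ≤ j → j ≤ (n : ℤ) → 2 ≤ g j := fun j h1 h2 => (hg j h1 h2).1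
  -- subset of the boundary
  have hsub : ↑(S1 ∪ S2 ∪ S3 ∪ S4) ⊆ {q : (ℤ × ℤ) × (ℤ × ℤ) |
      q.1.2 = q.2.2 ∧ |q.1.1 - q.2.1| = 1 ∧ q.1 ∈ F ∧ q.2 ∉ F} := by
    intro q hq
    simp only [Finset.coe_union, Set.mem_union, Finset.mem_coe, hS1, hS2, hS3, hS4,
      Finset.mem_image, Finset.mem_erase, Finset.mem_Icc] at hq
    rcases hq with ((⟨j, hj, rfl⟩ | ⟨j, hj, rfl⟩) | ⟨j, hj, rfl⟩) | ⟨j, hj, rfl⟩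
    · refine ⟨rfl, by norm_num, hrow1 j hj.1 hj.2, ?_⟩
      intro hmem
      have := (hbox _ hmem).1
      rw [Finset.mem_Icc] at this
      simp at this
    · refine ⟨rfl, by norm_num, hrow1 j hj.2.1 hj.2.2, ?_⟩
      intro hmem
      exact hj.1 ((hj0 j).mp hmem)
    · obtain ⟨h2g, hgn, hgF, hguniq⟩ := hg j hj.1 hj.2
      refine ⟨rfl, by simp, hgF, ?_⟩
      intro hmem
      rcases hguniq _ hmem with h | h <;> omega
    · obtain ⟨h2g, hgn, hgF, hguniq⟩ := hg j hj.2.1 hj.2.2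
      refine ⟨rfl, by simp, hgF, ?_⟩
      intro hmem
      rcases hguniq _ hmem with h | h
      · -- g j - 1 = 1, so g j = 2, so (2,j) ∈ F, so j = j0
        have : g j = 2 := by omega
        apply hj.1
        apply (hj0 j).mp
        rw [← this]; exact hgF
      · omega
  -- cardinalities
  have hj0mem : j0 ∈ Finset.Icc (1 : ℤ) n := Finset.mem_Icc.mpr ⟨hj01, hj0n⟩
  have hcard1 : S1.card = n := by
    rw [hS1, Finset.card_image_of_injective _ (fun a b h => by
      simpa using congrArg (fun q => q.1.2) h), Int.card_Icc]
    omega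
  have hcard2 : S2.card = n - 1 := by
    rw [hS2, Finset.card_image_of_injective _ (fun a b h => by
      simpa using congrArg (fun q => q.1.2) h), Finset.card_erase_of_mem hj0mem, Int.card_Icc]
    omega
  have hcard3 : S3.card = n := by
    rw [hS3, Finset.card_image_of_injOn (fun a _ b _ h => by
      simpa using congrArg (fun q => q.1.2) h), Int.card_Icc]
    omega
  have hcard4 : S4.card = n - 1 := by
    rw [hS4, Finset.card_image_of_injOn (fun a _ b _ h => by
      simpa using congrArg (fun q => q.1.2) h), Finset.card_erase_of_mem hj0mem, Int.card_Icc]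
    omega
  -- disjointness
  have hd12 : Disjoint S1 S2 := by
    rw [Finset.disjoint_left]
    rintro a ha hb
    simp only [hS1, hS2, Finset.mem_image, Finset.mem_erase, Finset.mem_Icc] at ha hb
    obtain ⟨j, _, rfl⟩ := ha
    obtain ⟨j', _, h⟩ := hb
    simp [Prod.ext_iff] at h
  have hd34 : Disjoint S3 S4 := by
    rw [Finset.disjoint_left]
    rintro a ha hb
    simp only [hS3, hS4, Finset.mem_image, Finset.mem_erase, Finset.mem_Icc] at ha hb
    obtain ⟨j, _, rfl⟩ := ha
    obtain ⟨j', _, h⟩ := hb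
    simp only [Prod.ext_iff, Prod.mk.injEq] at h
    obtain ⟨⟨h1, h2⟩, h3, h4⟩ := h
    omega
  have hd12_34 : Disjoint (S1 ∪ S2) (S3 ∪ S4) := by
    rw [Finset.disjoint_left]
    rintro a ha hb
    simp only [hS1, hS2, hS3, hS4, Finset.mem_union, Finset.mem_image, Finset.mem_erase,
      Finset.mem_Icc] at ha hb
    have ha1 : a.1.1 = 1 := by
      rcases ha with ⟨j, _, rfl⟩ | ⟨j, _, rfl⟩ <;> rfl
    have hb1 : 2 ≤ a.1.1 := by
      rcases hb with ⟨j, hj, rfl⟩ | ⟨j, hj, rfl⟩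
      · exact hg2 j hj.1 hj.2
      · exact hg2 j hj.2.1 hj.2.2
    omega
  have hcard : (S1 ∪ S2 ∪ S3 ∪ S4).card = 4 * n - 2 := by
    rw [Finset.union_assoc (S1 ∪ S2), Finset.card_union_of_disjoint hd12_34,
      Finset.card_union_of_disjoint hd12, Finset.card_union_of_disjoint hd34,
      hcard1, hcard2, hcard3, hcard4]
    omega
  calc 4 * n - 2 = (↑(S1 ∪ S2 ∪ S3 ∪ S4) : Set ((ℤ × ℤ) × (ℤ × ℤ))).ncard := by
        rw [Set.ncard_coe_finset, hcard]
    _ ≤ horizBoundaryLen F := by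
        rw [horizBoundaryLen]
        exact Set.ncard_le_ncard hsub (boundary_finite F)

lemma partB (n : ℕ) (hn : 2 ≤ n) :
    ∃ F : Finset (ℤ × ℤ), example4Image (n + 2) n F ∧ horizBoundaryLen F = 4 * n - 2 := by
  set F0 : Finset (ℤ × ℤ) :=
    (Finset.Icc (1 : ℤ) n).image (fun j => ((1 : ℤ), j)) ∪
    (Finset.Icc (1 : ℤ) n).image (fun j => (j + 1, j)) with hF0
  have hmem : ∀ p : ℤ × ℤ, p ∈ F0 ↔
      (∃ j : ℤ, (1 ≤ j ∧ j ≤ (n : ℤ)) ∧ p = (1, j)) ∨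
      (∃ j : ℤ, (1 ≤ j ∧ j ≤ (n : ℤ)) ∧ p = (j + 1, j)) := by
    intro p
    simp only [hF0, Finset.mem_union, Finset.mem_image, Finset.mem_Icc]
    constructor
    · rintro (⟨j, hj, rfl⟩ | ⟨j, hj, rfl⟩)
      · exact Or.inl ⟨j, hj, rfl⟩
      · exact Or.inr ⟨j, hj, rfl⟩
    · rintro (⟨j, hj, rfl⟩ | ⟨j, hj, rfl⟩)
      · exact Or.inl ⟨j, hj, rfl⟩
      · exact Or.inr ⟨j, hj, rfl⟩
  have himg : example4Image (n + 2) n F0 := by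
    refine ⟨?_, ?_, ?_, ?_, ?_⟩
    · intro p hp
      rw [hmem] at hp
      rw [Finset.mem_Icc, Finset.mem_Icc]
      rcases hp with ⟨j, hj, rfl⟩ | ⟨j, hj, rfl⟩ <;> omega
    · rw [rowSum]
      have : F0.filter (fun p => p.1 = 1) =
          (Finset.Icc (1 : ℤ) n).image (fun j => ((1 : ℤ), j)) := by
        ext p
        rw [Finset.mem_filter, hmem, Finset.mem_image]
        simp only [Finset.mem_Icc]
        constructor
        · rintro ⟨⟨j, hj, rfl⟩ | ⟨j, hj, rfl⟩, h⟩
          · exact ⟨j, hj, rfl⟩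
          · exact absurd (show j + 1 = (1:ℤ) from h) (by omega)
        · rintro ⟨j, hj, rfl⟩
          exact ⟨Or.inl ⟨j, hj, rfl⟩, rfl⟩
      rw [this, Finset.card_image_of_injective _ (fun a b h => by
        simpa using congrArg Prod.snd h), Int.card_Icc]
      omega
    · intro i hi2 hin
      rw [rowSum]
      have : F0.filter (fun p => p.1 = i) = {(i, i - 1)} := by
        ext p
        rw [Finset.mem_filter, hmem, Finset.mem_singleton]
        constructor
        · rintro ⟨⟨j, hj, rfl⟩ | ⟨j, hj, rfl⟩, h⟩
          · exact absurd (show (1:ℤ) = i from h) (by omega)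
          · have h' : j + 1 = i := h
            rw [Prod.ext_iff]
            exact ⟨h', show j = i - 1 by omega⟩
        · rintro rfl
          exact ⟨Or.inr ⟨i - 1, by omega, by
            rw [Prod.ext_iff]; exact ⟨show i = i - 1 + 1 by ring, rfl⟩⟩, rfl⟩
      rw [this, Finset.card_singleton]
    · rw [rowSum, Finset.card_eq_zero]
      ext p
      rw [Finset.mem_filter, hmem]
      simp only [Finset.notMem_empty, iff_false, not_and]
      rintro (⟨j, hj, rfl⟩ | ⟨j, hj, rfl⟩) <;> push_cast <;> omega
    · intro j hj1 hjn
      rw [colSum]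
      have : F0.filter (fun p => p.2 = j) = {((1 : ℤ), j), (j + 1, j)} := by
        ext p
        rw [Finset.mem_filter, hmem, Finset.mem_insert, Finset.mem_singleton]
        constructor
        · rintro ⟨⟨j', hj', rfl⟩ | ⟨j', hj', rfl⟩, h⟩
          · simp only at h; subst h; left; rfl
          · simp only at h; subst h; right; rfl
        · rintro (rfl | rfl)
          · exact ⟨Or.inl ⟨j, ⟨hj1, hjn⟩, rfl⟩, rfl⟩
          · exact ⟨Or.inr ⟨j, ⟨hj1, hjn⟩, rfl⟩, rfl⟩
      rw [this]
      rw [Finset.card_insert_of_notMem (by simp; omega), Finset.card_singleton]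
  refine ⟨F0, himg, ?_⟩
  -- upper bound via an explicit superset
  set T : Finset ((ℤ × ℤ) × (ℤ × ℤ)) :=
    (Finset.Icc (1 : ℤ) n).image (fun j => (((1 : ℤ), j), ((0 : ℤ), j))) ∪
    (Finset.Icc (2 : ℤ) n).image (fun j => (((1 : ℤ), j), ((2 : ℤ), j))) ∪
    (Finset.Icc (1 : ℤ) n).image (fun j => ((j + 1, j), (j + 2, j))) ∪
    (Finset.Icc (2 : ℤ) n).image (fun j => ((j + 1, j), (j, j))) with hT
  have hsubT : {q : (ℤ × ℤ) × (ℤ × ℤ) |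
      q.1.2 = q.2.2 ∧ |q.1.1 - q.2.1| = 1 ∧ q.1 ∈ F0 ∧ q.2 ∉ F0} ⊆ ↑T := by
    rintro ⟨p, p'⟩ ⟨hcol, habs, hp, hp'⟩
    simp only at hcol habs
    rw [hmem] at hp
    have hp'cases : p' = (p.1 - 1, p.2) ∨ p' = (p.1 + 1, p.2) := by
      rcases (abs_eq (by norm_num : (0:ℤ) ≤ 1)).mp habs with h | h
      · left; ext <;> simp <;> omega
      · right; ext <;> simp <;> omega
    simp only [hT, Finset.coe_union, Set.mem_union, Finset.mem_coe, Finset.mem_image,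
      Finset.mem_Icc]
    rcases hp with ⟨j, hj, rfl⟩ | ⟨j, hj, rfl⟩
    · rcases hp'cases with rfl | rfl
      · left; left; left; exact ⟨j, hj, rfl⟩
      · left; left; right
        refine ⟨j, ⟨?_, hj.2⟩, rfl⟩
        by_contra hlt
        have hj1 : j = 1 := by omega
        apply hp'
        rw [hmem]
        right
        exact ⟨1, ⟨le_refl _, by omega⟩, by simp [hj1]⟩
      -- note: (2, j) with j = 1 is (1+1, 1) ∈ F0
    · rcases hp'cases with rfl | rfl
      · right
        refine ⟨j, ⟨?_, hj.2⟩, by simp⟩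
        by_contra hlt
        have hj1 : j = 1 := by omega
        apply hp'
        rw [hmem]
        left
        exact ⟨1, ⟨le_refl _, by omega⟩, by simp [hj1]⟩
      · left; right
        exact ⟨j, hj, by simp; ring⟩
  have hTcard : T.card ≤ 4 * n - 2 := by
    have c1 : ((Finset.Icc (1 : ℤ) n).image
        (fun j => (((1 : ℤ), j), ((0 : ℤ), j)))).card ≤ n := by
      refine le_trans Finset.card_image_le ?_
      rw [Int.card_Icc]; omega
    have c2 : ((Finset.Icc (2 : ℤ) n).image
        (fun j => (((1 : ℤ), j), ((2 : ℤ), j)))).card ≤ n - 1 := by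
      refine le_trans Finset.card_image_le ?_
      rw [Int.card_Icc]; omega
    have c3 : ((Finset.Icc (1 : ℤ) n).image
        (fun j : ℤ => ((j + 1, j), (j + 2, j)))).card ≤ n := by
      refine le_trans Finset.card_image_le ?_
      rw [Int.card_Icc]; omega
    have c4 : ((Finset.Icc (2 : ℤ) n).image
        (fun j : ℤ => ((j + 1, j), (j, j)))).card ≤ n - 1 := by
      refine le_trans Finset.card_image_le ?_
      rw [Int.card_Icc]; omega
    have u1 := Finset.card_union_le
      ((Finset.Icc (1 : ℤ) n).image (fun j => (((1 : ℤ), j), ((0 : ℤ), j))))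
      ((Finset.Icc (2 : ℤ) n).image (fun j => (((1 : ℤ), j), ((2 : ℤ), j))))
    have u2 := Finset.card_union_le
      ((Finset.Icc (1 : ℤ) n).image (fun j => (((1 : ℤ), j), ((0 : ℤ), j))) ∪
       (Finset.Icc (2 : ℤ) n).image (fun j => (((1 : ℤ), j), ((2 : ℤ), j))))
      ((Finset.Icc (1 : ℤ) n).image (fun j : ℤ => ((j + 1, j), (j + 2, j))))
    have u3 := Finset.card_union_le
      ((Finset.Icc (1 : ℤ) n).image (fun j => (((1 : ℤ), j), ((0 : ℤ), j))) ∪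
       (Finset.Icc (2 : ℤ) n).image (fun j => (((1 : ℤ), j), ((2 : ℤ), j))) ∪
       (Finset.Icc (1 : ℤ) n).image (fun j : ℤ => ((j + 1, j), (j + 2, j))))
      ((Finset.Icc (2 : ℤ) n).image (fun j : ℤ => ((j + 1, j), (j, j))))
    rw [hT]
    omega
  have hub : horizBoundaryLen F0 ≤ 4 * n - 2 := by
    rw [horizBoundaryLen]
    calc Set.ncard _ ≤ (↑T : Set ((ℤ × ℤ) × (ℤ × ℤ))).ncard :=
          Set.ncard_le_ncard hsubT T.finite_toSet
      _ = T.card := Set.ncard_coe_finset T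
      _ ≤ 4 * n - 2 := hTcard
  have hlb : 4 * n - 2 ≤ horizBoundaryLen F0 := partA n hn F0 himg
  omega

/-- Example 4: for these line sums, every reconstruction has horizontal boundary of
length at least `4n - 2`, and this bound is attained by some reconstruction. -/
theorem example4 (n : ℕ) (hn : 2 ≤ n) (m : ℕ) (hm : m = n + 2) :
    (∀ F : Finset (ℤ × ℤ), example4Image m n F → 4 * n - 2 ≤ horizBoundaryLen F) ∧
    (∃ F : Finset (ℤ × ℤ), example4Image m n F ∧ horizBoundaryLen F = 4 * n - 2) := by
  subst hm
  exact ⟨fun F hF => partA n hn F hF, partB n hn⟩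
end

section
/- Let m, n be positive integers and let F be a binary image contained in {1,…,m} × {1,…,n} with row sums r_1,…,r_m and column sums c_1,…,c_n. Define b_i = #{j ∈ {1,…,n} : c_j ≥ i}. Suppose k is an integer with 1 ≤ k ≤ m such that Σ_{i=1}^{k} r_i < Σ_{i=1}^{k} b_i. Then there exists a column index j with 1 ≤ j ≤ n such that #{i : 1 ≤ i ≤ k and (i,j) ∈ F} < min(c_j, k); equivalently, column j contains at least one point of F in some row i with k+1 ≤ i ≤ m and at least one row i with 1 ≤ i ≤ k such that (i,j) ∉ F. -/
/-!
Count the points of `F` in rows `1, …, k` twice. Row by row they number `Σ_{i ≤ k} r_i`;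
column by column they number `Σ_j #{i ≤ k : (i,j) ∈ F}`. Dually, `b_i` counts the columns `j`
with `c_j ≥ i`, so `Σ_{i ≤ k} b_i = Σ_j min(c_j, k)`. The hypothesis thus says
`Σ_j #{i ≤ k : (i,j) ∈ F} < Σ_j min(c_j, k)`, and some column must realise the strict inequality.
-/

open Finset

theorem sum_rowSum_eq_sum_card_colwise (F : Finset (ℤ × ℤ)) (s t : Finset ℤ)
    (hF : ∀ p ∈ F, p.2 ∈ t) :
    ∑ i ∈ s, rowSum F i = ∑ j ∈ t, #{p ∈ F | p.2 = j ∧ p.1 ∈ s} := by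
  calc ∑ i ∈ s, rowSum F i = #{p ∈ F | p.1 ∈ s} := sum_card_fiberwise_eq_card_filter F s _
    _ = ∑ j ∈ t, #{p ∈ {p ∈ F | p.1 ∈ s} | p.2 = j} :=
        card_eq_sum_card_fiberwise fun p hp => hF p (mem_filter.1 hp).1
    _ = ∑ j ∈ t, #{p ∈ F | p.2 = j ∧ p.1 ∈ s} := by
        simp only [filter_filter, and_comm]

theorem card_filter_Icc_le_natCast (c : ℕ) {k : ℤ} (hk : 0 ≤ k) :
    (#{i ∈ Icc 1 k | i ≤ (c : ℤ)} : ℤ) = min (c : ℤ) k := by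
  have : {i ∈ Icc 1 k | i ≤ (c : ℤ)} = Icc 1 (min (c : ℤ) k) := by
    ext i
    simp only [mem_filter, mem_Icc, le_min_iff]
    tauto
  rw [this, Int.card_Icc]
  omega

theorem sum_card_filter_le_eq_sum_min (t : Finset ℤ) (c : ℤ → ℕ) {k : ℤ} (hk : 0 ≤ k) :
    ∑ i ∈ Icc 1 k, (#{j ∈ t | i ≤ (c j : ℤ)} : ℤ) = ∑ j ∈ t, min (c j : ℤ) k := by
  simp only [natCast_card_filter]
  rw [sum_comm]
  refine sum_congr rfl fun j _ => ?_
  rw [← natCast_card_filter, card_filter_Icc_le_natCast _ hk]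

theorem exists_deficient_column_general (m n : ℕ)
    (F : Finset (ℤ × ℤ))
    (hF : ∀ p ∈ F, p.1 ∈ Finset.Icc (1 : ℤ) (m : ℤ) ∧ p.2 ∈ Finset.Icc (1 : ℤ) (n : ℤ))
    (b : ℤ → ℕ)
    (hb : ∀ i : ℤ, b i = ((Finset.Icc (1 : ℤ) (n : ℤ)).filter fun j => i ≤ (colSum F j : ℤ)).card)
    (k : ℤ) (hk1 : 1 ≤ k)
    (hlt : ∑ i ∈ Finset.Icc (1 : ℤ) k, (rowSum F i : ℤ) <
      ∑ i ∈ Finset.Icc (1 : ℤ) k, (b i : ℤ)) :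
    ∃ j : ℤ, 1 ≤ j ∧ j ≤ (n : ℤ) ∧
      ((F.filter fun p => p.2 = j ∧ 1 ≤ p.1 ∧ p.1 ≤ k).card : ℤ) <
        min ((colSum F j : ℤ)) k := by
  have hrows : ∑ i ∈ Icc 1 k, (rowSum F i : ℤ) =
      ∑ j ∈ Icc 1 (n : ℤ), (#{p ∈ F | p.2 = j ∧ 1 ≤ p.1 ∧ p.1 ≤ k} : ℤ) := by
    have := sum_rowSum_eq_sum_card_colwise F (Icc 1 k) (Icc 1 n) fun p hp => (hF p hp).2
    simp only [mem_Icc] at this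
    exact_mod_cast this
  have hcols : ∑ i ∈ Icc 1 k, (b i : ℤ) = ∑ j ∈ Icc 1 (n : ℤ), min (colSum F j : ℤ) k := by
    simp only [hb]
    exact sum_card_filter_le_eq_sum_min _ _ (by omega)
  rw [hrows, hcols] at hlt
  obtain ⟨j, hj, hdef⟩ := exists_lt_of_sum_lt hlt
  exact ⟨j, (mem_Icc.1 hj).1, (mem_Icc.1 hj).2, hdef⟩

/-- If `Σ_{i=1}^k r_i < Σ_{i=1}^k b_i`, then there is a column `j` containing
fewer than `min(c_j, k)` points of `F` in rows `1, …, k` (equivalently: column `j`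
has a point of `F` in some row `i > k` and a missing point in some row `i ≤ k`). -/
theorem exists_deficient_column (m n : ℕ) (hm : 0 < m) (hn : 0 < n)
    (F : Finset (ℤ × ℤ))
    (hF : ∀ p ∈ F, p.1 ∈ Finset.Icc (1 : ℤ) (m : ℤ) ∧ p.2 ∈ Finset.Icc (1 : ℤ) (n : ℤ))
    (b : ℤ → ℕ)
    (hb : ∀ i : ℤ, b i = ((Finset.Icc (1 : ℤ) (n : ℤ)).filter fun j => i ≤ (colSum F j : ℤ)).card)
    (k : ℤ) (hk1 : 1 ≤ k) (hkm : k ≤ (m : ℤ))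
    (hlt : ∑ i ∈ Finset.Icc (1 : ℤ) k, (rowSum F i : ℤ) <
      ∑ i ∈ Finset.Icc (1 : ℤ) k, (b i : ℤ)) :
    ∃ j : ℤ, 1 ≤ j ∧ j ≤ (n : ℤ) ∧
      ((F.filter fun p => p.2 = j ∧ 1 ≤ p.1 ∧ p.1 ≤ k).card : ℤ) <
        min ((colSum F j : ℤ)) k :=
  exists_deficient_column_general m n F hF b hb k hk1 hlt
end
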